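/- arXiv:1304.5404 — 12 statements merged into one kernel-verified Lean document; each statement's English description precedes it below -/
import Mathlib

section
/- Let A be a d×d real Metzler matrix (all off-diagonal entries nonnegative). Then A is Hurwitz-stable if and only if there exist a real number z > 0 and a vector v ∈ ℝ^d with v_i > 0 for every i such that ((z·I + A) v)_i ≤ 0 for every i, where I is the d×d identity matrix. -/
/-!
For the reverse implication, a positive vector `v` with `A v ≤ -z v` is a weighted diagonal
dominance certificate: Gershgorin's theorem for the similar matrix `diag(v)⁻¹ A diag(v)` puts
every eigenvalue in the half-plane `Re μ ≤ -z`.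

For the forward implication, shift `A` to the entrywise nonnegative `B = A + s I`. The resolvent
`(t I - B)⁻¹` is nonnegative for large `t` by the Neumann series, and nonnegativity propagates
downwards because `(t - ε) I - B = (t I - B) (1 - ε (t I - B)⁻¹)`. Hurwitz stability means that no
`t ≥ s` is an eigenvalue of `B`, so the resolvent is continuous on `[s, ∞)` and a continuous
induction reaches `t = s`, where `(s I - B)⁻¹ = (-A)⁻¹`. Then `v = (-A)⁻¹ 1` is positive and
`A v = -1`.
-/

/-- A real square matrix is Metzler if all its off-diagonal entries are nonnegative. -/
def Matrix.Metzler {d : ℕ} (A : Matrix (Fin d) (Fin d) ℝ) : Prop :=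
  ∀ i j, i ≠ j → 0 ≤ A i j

/-- A real square matrix is Hurwitz-stable if all its complex eigenvalues have
strictly negative real part. -/
def Matrix.HurwitzStable {d : ℕ} (A : Matrix (Fin d) (Fin d) ℝ) : Prop :=
  ∀ μ ∈ spectrum ℂ (A.map (Complex.ofReal)), μ.re < 0


open Filter Topology Set

namespace Matrix

variable {l m n R : Type*}

def IsNonneg [Zero R] [LE R] (M : Matrix m n R) : Prop := ∀ i j, 0 ≤ M i j

section OrderedSemiring

variable [Semiring R] [PartialOrder R] [IsOrderedRing R]

theorem IsNonneg.smul {M : Matrix m n R} (hM : M.IsNonneg) {c : R} (hc : 0 ≤ c) :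
    (c • M).IsNonneg := fun i j =>
  mul_nonneg hc (hM i j)

theorem IsNonneg.mul [Fintype m] {M : Matrix l m R} {N : Matrix m n R} (hM : M.IsNonneg)
    (hN : N.IsNonneg) : (M * N).IsNonneg := fun i j =>
  Finset.sum_nonneg fun k _ => mul_nonneg (hM i k) (hN k j)

theorem isNonneg_one [DecidableEq n] : (1 : Matrix n n R).IsNonneg := fun i j => by
  rw [one_apply]; split_ifs <;> simp

theorem IsNonneg.pow [Fintype n] [DecidableEq n] {M : Matrix n n R} (hM : M.IsNonneg) (k : ℕ) :
    (M ^ k).IsNonneg := by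
  induction k with
  | zero => exact pow_zero M ▸ isNonneg_one
  | succ k ih => exact pow_succ M k ▸ ih.mul hM

theorem IsNonneg.sum {ι : Type*} {s : Finset ι} {M : ι → Matrix m n R}
    (hM : ∀ k ∈ s, (M k).IsNonneg) : (∑ k ∈ s, M k).IsNonneg := fun i j => by
  rw [sum_apply]
  exact Finset.sum_nonneg fun k hk => hM k hk i j

end OrderedSemiring

theorem isClosed_setOf_isNonneg : IsClosed {M : Matrix m n ℝ | M.IsNonneg} := by
  simp only [IsNonneg, ofPred_forall]
  exact isClosed_iInter fun i => isClosed_iInter fun j =>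
    isClosed_le continuous_const ((continuous_apply j).comp (continuous_apply i))

variable [Fintype n] [DecidableEq n] {M B : Matrix n n ℝ}

theorem IsNonneg.eventually_isNonneg_inv_one_sub_smul (hM : M.IsNonneg) :
    ∀ᶠ ε : ℝ in 𝓝[>] 0, (1 - ε • M)⁻¹.IsNonneg := by
  -- any submultiplicative complete norm would do; entrywise nonnegativity is norm-free
  let := Matrix.linftyOpNormedRing (n := n) (α := ℝ)
  let := Matrix.linftyOpNormedAlgebra (R := ℝ) (n := n) (α := ℝ)
  have hsmall : ∀ᶠ ε : ℝ in 𝓝 0, ‖ε • M‖ < 1 :=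
    ((continuous_id.smul continuous_const).norm.tendsto' 0 0 (by simp)).eventually
      (eventually_lt_nhds one_pos)
  filter_upwards [nhdsWithin_le_nhds hsmall, self_mem_nhdsWithin] with ε hε hε0
  have hsum := summable_geometric_of_norm_lt_one hε
  rw [inv_eq_right_inv (mul_neg_geom_series _ hε)]
  exact isClosed_setOf_isNonneg.mem_of_tendsto hsum.hasSum <| Eventually.of_forall fun s =>
    IsNonneg.sum fun k _ => (hM.smul hε0.le).pow k

theorem IsNonneg.eventually_isNonneg_inv_smul_one_sub (hB : B.IsNonneg) :
    ∀ᶠ t : ℝ in atTop, (t • 1 - B)⁻¹.IsNonneg := by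
  filter_upwards [tendsto_inv_atTop_nhdsGT_zero.eventually hB.eventually_isNonneg_inv_one_sub_smul,
    eventually_gt_atTop 0] with t ht ht0
  have hfactor : t • (1 : Matrix n n ℝ) - B = (1 - t⁻¹ • B) * t • 1 := by
    rw [Matrix.mul_smul, mul_one, smul_sub, smul_smul, mul_inv_cancel₀ ht0.ne', one_smul]
  have hscalar : (t • (1 : Matrix n n ℝ))⁻¹ = t⁻¹ • 1 :=
    inv_eq_right_inv (by rw [smul_mul_smul, mul_one, mul_inv_cancel₀ ht0.ne', one_smul])
  rw [hfactor, mul_inv_rev, hscalar]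
  exact (isNonneg_one.smul (inv_nonneg.2 ht0.le)).mul ht

theorem eventually_nhdsLT_isNonneg_inv_smul_one_sub {c : ℝ} (hc : IsUnit (c • 1 - B))
    (hR : (c • 1 - B)⁻¹.IsNonneg) : ∀ᶠ t in 𝓝[<] c, (t • 1 - B)⁻¹.IsNonneg := by
  have hgap : Tendsto (fun t => c - t) (𝓝[<] c) (𝓝[>] 0) :=
    tendsto_nhdsWithin_of_tendsto_nhds_of_eventually_within _
      (((continuous_sub_left c).tendsto' c 0 (sub_self c)).mono_left nhdsWithin_le_nhds)
      (eventually_nhdsWithin_of_forall fun _ ht => mem_Ioi.2 (sub_pos.2 ht))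
  have hfactor (t : ℝ) :
      t • (1 : Matrix n n ℝ) - B = (c • 1 - B) * (1 - (c - t) • (c • 1 - B)⁻¹) := by
    rw [mul_sub, mul_one, Matrix.mul_smul, mul_nonsing_inv _ ((isUnit_iff_isUnit_det _).1 hc),
      sub_smul]
    abel
  filter_upwards [hgap.eventually hR.eventually_isNonneg_inv_one_sub_smul] with t ht
  rw [hfactor, mul_inv_rev]
  exact ht.mul hR

theorem IsNonneg.isNonneg_inv_smul_one_sub (hB : B.IsNonneg) {s : ℝ}
    (h : ∀ t, s ≤ t → IsUnit (t • 1 - B)) : (s • 1 - B)⁻¹.IsNonneg := by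
  obtain ⟨T, hT, hsT⟩ :=
    (hB.eventually_isNonneg_inv_smul_one_sub.and (eventually_ge_atTop s)).exists
  have hcont : ContinuousOn (fun t : ℝ => (t • 1 - B)⁻¹) (Icc s T) := fun t ht =>
    ((continuousAt_matrix_inv _ (NormedRing.inverse_continuousAt
      ((isUnit_iff_isUnit_det _).1 (h t ht.1)).unit)).comp (f := fun t : ℝ => t • 1 - B)
      (by fun_prop)).continuousWithinAt
  have hclosed : IsClosed ({t : ℝ | (t • 1 - B)⁻¹.IsNonneg} ∩ Icc s T) := by
    rw [inter_comm]
    exact hcont.preimage_isClosed_of_isClosed isClosed_Icc isClosed_setOf_isNonneg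
  refine hclosed.mem_of_ge_of_forall_exists_lt hT hsT fun c hc => ?_
  exact ((eventually_nhdsLT_isNonneg_inv_smul_one_sub (h c hc.2.1.le) hc.1).and
    (Ico_mem_nhdsLT hc.2.1)).exists

theorem IsNonneg.mulVec_one_pos [CommRing R] [LinearOrder R] [IsStrictOrderedRing R]
    {M : Matrix n n R} (hM : M.IsNonneg) (hu : IsUnit M) (i : n) : 0 < (M *ᵥ 1) i := by
  have hrow : (M *ᵥ 1) i = ∑ j, M i j := by simp [mulVec, dotProduct]
  rw [hrow]
  refine (Finset.sum_nonneg fun j _ => hM i j).lt_of_ne fun hzero => ?_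
  have hdet : M.det = 0 := det_eq_zero_of_row_eq_zero i fun j =>
    (Finset.sum_eq_zero_iff_of_nonneg fun j _ => hM i j).1 hzero.symm j (Finset.mem_univ j)
  exact ((isUnit_iff_isUnit_det M).1 hu).ne_zero hdet

theorem exists_norm_sub_diag_mul_le_of_mem_spectrum {K : Type*} [NormedField K]
    {M : Matrix n n K} {w : n → K} (hw : ∀ i, w i ≠ 0) {μ : K} (hμ : μ ∈ spectrum K M) :
    ∃ k, ‖μ - M k k‖ * ‖w k‖ ≤ ∑ j ∈ Finset.univ.erase k, ‖M k j‖ * ‖w j‖ := by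
  let u : (Matrix n n K)ˣ :=
    ⟨diagonal w, diagonal w⁻¹, by simp [hw], by simp [hw]⟩
  have hconj : (u⁻¹ * M * u : Matrix n n K) = of fun i j => (w i)⁻¹ * M i j * w j := by
    ext i j
    simp [u, diagonal_mul, mul_diagonal]
  have hμ' : Module.End.HasEigenvalue (toLin' (u⁻¹ * M * u : Matrix n n K)) μ := by
    rwa [Module.End.hasEigenvalue_iff_mem_spectrum, spectrum_toLin', spectrum.units_conjugate']
  obtain ⟨k, hk⟩ := eigenvalue_mem_ball hμ'
  refine ⟨k, ?_⟩
  rw [mem_closedBall_iff_norm, hconj] at hk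
  have hdiag : (w k)⁻¹ * M k k * w k = M k k := by
    rw [mul_right_comm, inv_mul_cancel₀ (hw k), one_mul]
  simp only [of_apply, hdiag] at hk
  simp only [norm_mul, norm_inv, mul_assoc, ← Finset.mul_sum] at hk
  rw [mul_comm]
  exact (le_inv_mul_iff₀ (norm_pos_iff.2 (hw k))).1 hk

variable {d : ℕ} {A : Matrix (Fin d) (Fin d) ℝ}

theorem Metzler.exists_isNonneg_add_smul_one (hA : A.Metzler) :
    ∃ s : ℝ, (A + s • 1).IsNonneg := by
  obtain ⟨s, hs⟩ := Finite.exists_le fun i => -A i i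
  refine ⟨s, fun i j => ?_⟩
  rcases eq_or_ne i j with rfl | hij
  · simp only [add_apply, smul_apply, one_apply_eq, smul_eq_mul, mul_one]
    linarith [hs i]
  · simpa [one_apply_ne hij] using hA i j hij

theorem HurwitzStable.isUnit_smul_one_sub (hA : A.HurwitzStable) {t : ℝ} (ht : 0 ≤ t) :
    IsUnit (t • 1 - A) := by
  rw [← Algebra.algebraMap_eq_smul_one, ← spectrum.notMem_iff, mem_spectrum_iff_isRoot_charpoly]
  intro hroot
  have hmem : (t : ℂ) ∈ spectrum ℂ (A.map Complex.ofReal) := by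
    rw [mem_spectrum_iff_isRoot_charpoly]
    exact (charpoly_map A Complex.ofRealHom) ▸ hroot.map
  exact (hA _ hmem).not_ge (by simpa using ht)

theorem Metzler.isNonneg_inv_neg (hA : A.Metzler) (hH : A.HurwitzStable) :
    (-A)⁻¹.IsNonneg := by
  obtain ⟨s, hs⟩ := hA.exists_isNonneg_add_smul_one
  have hunit (t : ℝ) (hst : s ≤ t) : IsUnit (t • 1 - (A + s • 1)) := by
    have hshift : t • (1 : Matrix (Fin d) (Fin d) ℝ) - (A + s • 1) = (t - s) • 1 - A := by
      rw [sub_smul]; abel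
    exact hshift ▸ hH.isUnit_smul_one_sub (sub_nonneg.2 hst)
  simpa using hs.isNonneg_inv_smul_one_sub hunit

theorem Metzler.exists_pos_mulVec_eq_neg_one (hA : A.Metzler) (hH : A.HurwitzStable) :
    ∃ v : Fin d → ℝ, (∀ i, 0 < v i) ∧ A *ᵥ v = -1 := by
  have hu : IsUnit (-A) := by simpa using hH.isUnit_smul_one_sub le_rfl
  refine ⟨(-A)⁻¹ *ᵥ 1, (hA.isNonneg_inv_neg hH).mulVec_one_pos (isUnit_nonsing_inv_iff.2 hu), ?_⟩
  have hinv := mul_nonsing_inv (-A) ((isUnit_iff_isUnit_det _).1 hu)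
  rw [neg_mul, neg_eq_iff_eq_neg] at hinv
  rw [mulVec_mulVec, hinv, neg_mulVec, one_mulVec]

theorem Metzler.hurwitzStable_of_mulVec_nonpos (hA : A.Metzler) {z : ℝ} (hz : 0 < z)
    {v : Fin d → ℝ} (hv : ∀ i, 0 < v i) (hAv : ∀ i, ((z • 1 + A) *ᵥ v) i ≤ 0) :
    A.HurwitzStable := by
  intro μ hμ
  obtain ⟨k, hk⟩ := exists_norm_sub_diag_mul_le_of_mem_spectrum
    (w := fun i => (v i : ℂ)) (fun i => Complex.ofReal_ne_zero.2 (hv i).ne') hμ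
  have hoff : ∑ j ∈ Finset.univ.erase k, ‖(A.map Complex.ofReal) k j‖ * ‖(v j : ℂ)‖ =
      ∑ j ∈ Finset.univ.erase k, A k j * v j :=
    Finset.sum_congr rfl fun j hj => by
      rw [map_apply, Complex.norm_real, Complex.norm_real, Real.norm_of_nonneg
        (hA k j (Finset.ne_of_mem_erase hj).symm), Real.norm_of_nonneg (hv j).le]
  have hrow : ((z • 1 + A) *ᵥ v) k =
      z * v k + A k k * v k + ∑ j ∈ Finset.univ.erase k, A k j * v j := by
    rw [add_mulVec, smul_mulVec, one_mulVec, Pi.add_apply, Pi.smul_apply, smul_eq_mul, mulVec,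
      dotProduct, ← Finset.add_sum_erase _ _ (Finset.mem_univ k), add_assoc]
  have hre : (μ.re - A k k) * v k ≤ ‖μ - A k k‖ * v k :=
    mul_le_mul_of_nonneg_right (by simpa using Complex.re_le_norm (μ - A k k)) (hv k).le
  rw [hoff, map_apply, Complex.norm_real, Real.norm_of_nonneg (hv k).le] at hk
  nlinarith [hAv k, hv k]

end Matrix

theorem metzler_hurwitz_iff_exists_shifted_pos_vec {d : ℕ} (A : Matrix (Fin d) (Fin d) ℝ)
    (hA : A.Metzler) :
    A.HurwitzStable ↔
      ∃ z : ℝ, 0 < z ∧ ∃ v : Fin d → ℝ, (∀ i, 0 < v i) ∧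
        ∀ i, ((z • (1 : Matrix (Fin d) (Fin d) ℝ) + A).mulVec v) i ≤ 0 := by
  refine ⟨fun hH => ?_, fun ⟨z, hz, v, hv, hAv⟩ => hA.hurwitzStable_of_mulVec_nonpos hz hv hAv⟩
  obtain ⟨v, hv, hAv⟩ := hA.exists_pos_mulVec_eq_neg_one hH
  have hsmall : ∀ᶠ z in 𝓝[>] (0 : ℝ), ∀ i, z * v i ≤ 1 :=
    eventually_all.2 fun i => nhdsWithin_le_nhds <|
      ((continuous_mul_const (v i)).tendsto' 0 0 (zero_mul _)).eventually
        (eventually_le_nhds one_pos)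
  obtain ⟨z, hzv, hz⟩ := (hsmall.and self_mem_nhdsWithin).exists
  refine ⟨z, hz, v, hv, fun i => ?_⟩
  simpa [Matrix.add_mulVec, Matrix.smul_mulVec, hAv] using hzv i
end

section
/- Let A and B be d×d real Metzler matrices (all off-diagonal entries nonnegative) such that A_{ij} ≤ B_{ij} for all i, j. If B is Hurwitz-stable, then A is Hurwitz-stable. -/
/-!
Shifting by a large multiple of the identity turns `A` and `B` into entrywise nonnegative
matrices `A + cI ≤ B + cI`. For such matrices Gelfand's formula gives
`ρ(A + cI) ≤ ρ(B + cI)`, since the entries of the powers, hence their ℓ∞ operator norms,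
are ordered the same way. As the finitely many eigenvalues `z` of `B` lie in the open left
half-plane, `|c + z| < c` once `c` is large, so every eigenvalue `μ` of `A` satisfies
`c + Re μ ≤ |c + μ| ≤ ρ(B + cI) < c`.
-/

open Filter
open scoped ENNReal Pointwise

namespace Matrix

variable {n : Type*} [Fintype n]

theorem norm_pow_apply_le_of_norm_apply_le {R : Type*} [SeminormedRing R] [NormOneClass R]
    [DecidableEq n] {M : Matrix n n R} {N : Matrix n n ℝ} (h : ∀ i j, ‖M i j‖ ≤ N i j)
    (k : ℕ) (i j : n) : ‖(M ^ k) i j‖ ≤ (N ^ k) i j := by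
  induction k generalizing j with
  | zero => by_cases hij : i = j <;> simp [hij]
  | succ k ih =>
    rw [pow_succ, pow_succ, mul_apply, mul_apply]
    refine (norm_sum_le _ _).trans (Finset.sum_le_sum fun l _ => (norm_mul_le _ _).trans ?_)
    exact mul_le_mul (ih l) (h l j) (norm_nonneg _) ((norm_nonneg _).trans (ih l))

section LinftyOp

-- The spectral radius does not depend on a norm; the ℓ∞ operator norm just makes complex
-- matrices a Banach algebra, so that Gelfand's formula applies.
attribute [local instance] Matrix.linftyOpSeminormedAddCommGroup Matrix.linftyOpNormedRing
  Matrix.linftyOpNormedAlgebra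

theorem linfty_opNNNorm_le_of_norm_apply_le {m α β : Type*} [Fintype m]
    [SeminormedAddCommGroup α] [SeminormedAddCommGroup β] {M : Matrix m n α} {N : Matrix m n β}
    (h : ∀ i j, ‖M i j‖ ≤ ‖N i j‖) : ‖M‖₊ ≤ ‖N‖₊ := by
  rw [linfty_opNNNorm_def, linfty_opNNNorm_def]
  exact Finset.sup_mono_fun fun i _ => Finset.sum_le_sum fun j _ => h i j

theorem spectralRadius_le_of_norm_apply_le [DecidableEq n] {M : Matrix n n ℂ} {N : Matrix n n ℝ}
    (h : ∀ i j, ‖M i j‖ ≤ N i j) :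
    spectralRadius ℂ M ≤ spectralRadius ℂ (N.map ((↑) : ℝ → ℂ)) := by
  have hpow (k : ℕ) : ‖M ^ k‖₊ ≤ ‖N.map ((↑) : ℝ → ℂ) ^ k‖₊ := by
    have hmap : N.map ((↑) : ℝ → ℂ) ^ k = (N ^ k).map (↑) :=
      (map_pow Complex.ofRealHom.mapMatrix N k).symm
    rw [hmap]
    refine linfty_opNNNorm_le_of_norm_apply_le fun i j => ?_
    rw [map_apply, Complex.norm_real]
    exact (norm_pow_apply_le_of_norm_apply_le h k i j).trans (le_abs_self _)
  refine le_of_tendsto_of_tendsto' (spectrum.pow_nnnorm_pow_one_div_tendsto_nhds_spectralRadius M)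
    (spectrum.pow_nnnorm_pow_one_div_tendsto_nhds_spectralRadius _) fun k => ?_
  gcongr
  exact hpow k

theorem exists_norm_le_of_mem_spectrum_of_norm_apply_le [DecidableEq n] {M : Matrix n n ℂ}
    {N : Matrix n n ℝ} (h : ∀ i j, ‖M i j‖ ≤ N i j) {μ : ℂ} (hμ : μ ∈ spectrum ℂ M) :
    ∃ z ∈ spectrum ℂ (N.map ((↑) : ℝ → ℂ)), ‖μ‖ ≤ ‖z‖ := by
  have : Nontrivial (Matrix n n ℂ) := by
    by_contra htriv
    rw [not_nontrivial_iff_subsingleton] at htriv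
    simp [spectrum.of_subsingleton] at hμ
  obtain ⟨z, hz, hρ⟩ := spectrum.exists_nnnorm_eq_spectralRadius (N.map ((↑) : ℝ → ℂ))
  refine ⟨z, hz, ?_⟩
  have : (‖μ‖₊ : ℝ≥0∞) ≤ ‖z‖₊ :=
    hρ ▸ (le_iSup₂ (α := ℝ≥0∞) μ hμ).trans (spectralRadius_le_of_norm_apply_le h)
  exact_mod_cast this

end LinftyOp

theorem Metzler.add_smul_one_apply_nonneg {d : ℕ} {A : Matrix (Fin d) (Fin d) ℝ}
    (hA : A.Metzler) {c : ℝ} (hc : ∀ i, -A i i ≤ c) (i j : Fin d) : 0 ≤ (A + c • 1) i j := by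
  by_cases hij : i = j
  · subst hij
    simp only [add_apply, smul_apply, one_apply_eq, smul_eq_mul, mul_one]
    linarith [hc i]
  · simpa [one_apply_ne hij] using hA i j hij

theorem spectrum_map_ofReal_add_smul_one [DecidableEq n] (N : Matrix n n ℝ) (c : ℝ) :
    spectrum ℂ ((N + c • 1).map ((↑) : ℝ → ℂ)) =
      ({(c : ℂ)} : Set ℂ) + spectrum ℂ (N.map ((↑) : ℝ → ℂ)) := by
  have hshift : (N + c • 1).map ((↑) : ℝ → ℂ) = algebraMap ℂ _ (c : ℂ) + N.map (↑) := by
    ext i j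
    by_cases hij : i = j <;> simp [hij, algebraMap_matrix_apply, add_comm]
  rw [hshift, spectrum.singleton_add_eq]

end Matrix

namespace Complex

theorem re_neg_of_norm_ofReal_add_lt {z : ℂ} {c : ℝ} (h : ‖(c : ℂ) + z‖ < c) : z.re < 0 := by
  have := (re_le_norm ((c : ℂ) + z)).trans_lt h
  simp only [add_re, ofReal_re] at this
  linarith

theorem eventually_norm_ofReal_add_lt {z : ℂ} (hz : z.re < 0) :
    ∀ᶠ c : ℝ in atTop, ‖(c : ℂ) + z‖ < c := by
  filter_upwards [eventually_gt_atTop 0, eventually_gt_atTop (‖z‖ ^ 2 / (2 * -z.re))] with c hc0 hc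
  rw [div_lt_iff₀ (by linarith)] at hc
  refine lt_of_pow_lt_pow_left₀ 2 hc0.le ?_
  have hz2 : ‖z‖ ^ 2 = z.re ^ 2 + z.im ^ 2 := by rw [Complex.sq_norm, normSq_apply]; ring
  have hcz2 : ‖(c : ℂ) + z‖ ^ 2 = (c + z.re) ^ 2 + z.im ^ 2 := by
    rw [Complex.sq_norm, normSq_apply]; simp only [add_re, add_im, ofReal_re, ofReal_im]; ring
  nlinarith

end Complex

theorem metzler_hurwitz_of_le_hurwitz_general {d : ℕ} (A B : Matrix (Fin d) (Fin d) ℝ)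
    (hA : A.Metzler) (hAB : ∀ i j, A i j ≤ B i j)
    (hBstab : B.HurwitzStable) : A.HurwitzStable := by
  intro μ hμ
  obtain ⟨c, hcA, hcB⟩ : ∃ c : ℝ, (∀ i, -A i i ≤ c) ∧
      ∀ z ∈ spectrum ℂ (B.map ((↑) : ℝ → ℂ)), ‖(c : ℂ) + z‖ < c :=
    ((eventually_all.2 fun i => eventually_ge_atTop (-A i i)).and
      ((B.map _).finite_spectrum.eventually_all.2 fun z hz =>
        Complex.eventually_norm_ofReal_add_lt (hBstab z hz))).exists
  have hdom (i j) : ‖(A + c • 1).map ((↑) : ℝ → ℂ) i j‖ ≤ (B + c • 1) i j := by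
    rw [Matrix.map_apply, Complex.norm_real,
      Real.norm_of_nonneg (hA.add_smul_one_apply_nonneg hcA i j)]
    simpa using hAB i j
  have hμc : (c : ℂ) + μ ∈ spectrum ℂ ((A + c • 1).map ((↑) : ℝ → ℂ)) := by
    rw [Matrix.spectrum_map_ofReal_add_smul_one]
    exact Set.add_mem_add rfl hμ
  obtain ⟨_, hw, hμw⟩ := Matrix.exists_norm_le_of_mem_spectrum_of_norm_apply_le hdom hμc
  rw [Matrix.spectrum_map_ofReal_add_smul_one] at hw
  obtain ⟨_, rfl, z, hz, rfl⟩ := hw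
  exact Complex.re_neg_of_norm_ofReal_add_lt (hμw.trans_lt (hcB z hz))

theorem metzler_hurwitz_of_le_hurwitz {d : ℕ} (A B : Matrix (Fin d) (Fin d) ℝ)
    (hA : A.Metzler) (hB : B.Metzler) (hAB : ∀ i j, A i j ≤ B i j)
    (hBstab : B.HurwitzStable) : A.HurwitzStable :=
  metzler_hurwitz_of_le_hurwitz_general A B hA hAB hBstab
end

section
/- Let Δ = [-1,1]^η and let A : Δ → ℝ^{d×d} be a family of Metzler matrices (each A(δ) has all off-diagonal entries nonnegative). Suppose there is a matrix A₊ ∈ ℝ^{d×d} such that A(δ)_{ij} ≤ (A₊)_{ij} for all δ ∈ Δ and all i, j, and A₊ = A(δ*) for some δ* ∈ Δ. Then the following three statements are equivalent: (1) A(δ) is Hurwitz-stable for every δ ∈ Δ; (2) A₊ is Hurwitz-stable; (3) there exists a vector v ∈ ℝ^d with v_i > 0 for all i and (A₊ v)_i < 0 for all i. -/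
/-- The uncertainty set Δ = [-1,1]^η. -/
def UncertaintyBox (η : ℕ) : Set (Fin η → ℝ) :=
  {δ | ∀ i, δ i ∈ Set.Icc (-1 : ℝ) 1}

open Matrix

theorem eigenvalue_mem_ball_weighted {K n : Type*} [NormedField K] [Fintype n] [DecidableEq n]
    {A : Matrix n n K} {w : n → K} (hw : ∀ i, w i ≠ 0) {μ : K} (hμ : μ ∈ spectrum K A) :
    ∃ k, μ ∈ Metric.closedBall (A k k) (∑ j ∈ Finset.univ.erase k, ‖A k j‖ * ‖w j‖ / ‖w k‖) := by
  let u : (Matrix n n K)ˣ :=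
    ⟨diagonal w, diagonal w⁻¹, by simp [hw], by simp [hw]⟩
  rw [← spectrum.units_conjugate' (u := u), ← spectrum_toLin',
    ← Module.End.hasEigenvalue_iff_mem_spectrum] at hμ
  obtain ⟨k, hk⟩ := eigenvalue_mem_ball hμ
  refine ⟨k, ?_⟩
  simpa [u, hw, norm_mul, div_eq_inv_mul, mul_comm, mul_left_comm, mul_assoc] using hk

theorem pos_of_forall_nonneg_imp_pos {X ι : Type*} [TopologicalSpace X] [PreconnectedSpace X]
    [Finite ι] {f : X → ι → ℝ} (hf : Continuous f)
    (hpos : ∀ x, 0 ≤ f x → ∀ i, 0 < f x i) {x₀ : X} (h₀ : 0 ≤ f x₀) (x : X) (i : ι) :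
    0 < f x i := by
  have hclopen : IsClopen {x | 0 ≤ f x} := by
    refine ⟨isClosed_le continuous_const hf, ?_⟩
    have : {x | 0 ≤ f x} = ⋂ i, {x | 0 < f x i} :=
      Set.ext fun x => ⟨fun hx => Set.mem_iInter.2 (hpos x hx),
        fun hx i => (Set.mem_iInter.1 hx i).le⟩
    rw [this]
    exact isOpen_iInter_of_finite fun i =>
      isOpen_lt continuous_const ((continuous_apply i).comp hf)
  exact hpos x ((hclopen.eq_univ ⟨x₀, h₀⟩).superset (Set.mem_univ x)) i

namespace Matrix
variable {d : ℕ} {M : Matrix (Fin d) (Fin d) ℝ} {v : Fin d → ℝ}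

theorem Metzler.hurwitzStable_of_mulVec_neg (hM : M.Metzler) (hv : ∀ i, 0 < v i)
    (hMv : ∀ i, (M *ᵥ v) i < 0) : M.HurwitzStable := by
  intro μ hμ
  obtain ⟨k, hk⟩ := eigenvalue_mem_ball_weighted (w := fun i => (v i : ℂ))
    (fun i => Complex.ofReal_ne_zero.2 (hv i).ne') hμ
  have hradius :
      ∑ j ∈ Finset.univ.erase k, ‖(M k j : ℂ)‖ * ‖(v j : ℂ)‖ / ‖(v k : ℂ)‖ < -M k k := by
    rw [← Finset.sum_div, div_lt_iff₀ (by simpa using (hv k).ne')]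
    calc ∑ j ∈ Finset.univ.erase k, ‖(M k j : ℂ)‖ * ‖(v j : ℂ)‖
        = ∑ j ∈ Finset.univ.erase k, M k j * v j := Finset.sum_congr rfl fun j hj => by
          simp [abs_of_nonneg (hM k j (Finset.ne_of_mem_erase hj).symm), abs_of_pos (hv j)]
      _ = (M *ᵥ v) k - M k k * v k := by
          rw [Finset.sum_erase_eq_sub (Finset.mem_univ k)]; rfl
      _ < -M k k * ‖(v k : ℂ)‖ := by
          rw [Complex.norm_real, Real.norm_of_nonneg (hv k).le]; linarith [hMv k]
  have hre : μ.re - M k k ≤ dist μ (M k k) := by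
    simpa [dist_eq_norm] using Complex.re_le_norm (μ - M k k)
  simp only [map_apply, Metric.mem_closedBall] at hk
  linarith

theorem Metzler.pos_of_nonneg_of_mulVec_neg (hM : M.Metzler) (hv : 0 ≤ v)
    (hMv : ∀ i, (M *ᵥ v) i < 0) (i : Fin d) : 0 < v i := by
  refine (hv i).lt_of_ne fun hvi => (hMv i).not_ge ?_
  rw [mulVec, dotProduct, ← Finset.add_sum_erase _ _ (Finset.mem_univ i), ← hvi, Pi.zero_apply,
    mul_zero, zero_add]
  exact Finset.sum_nonneg fun j hj => mul_nonneg (hM i j (Finset.ne_of_mem_erase hj).symm) (hv j)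

theorem HurwitzStable.det_sub_smul_one_ne_zero (hH : M.HurwitzStable) {r : ℝ} (hr : 0 ≤ r) :
    (M - r • 1).det ≠ 0 := by
  intro hdet
  refine (hH r ?_).not_ge (by simpa using hr)
  rw [spectrum.mem_iff, Algebra.algebraMap_eq_smul_one, ← IsUnit.neg_iff, neg_sub,
    isUnit_iff_isUnit_det, isUnit_iff_ne_zero, not_not]
  have : M.map Complex.ofReal - (r : ℂ) • 1 = (M - r • 1).map Complex.ofRealHom := by
    ext i j; by_cases h : i = j <;> simp [h]
  rw [this, ← RingHom.mapMatrix_apply, ← RingHom.map_det, hdet, map_zero]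

theorem HurwitzStable.det_homotopy_ne_zero (hH : M.HurwitzStable) {t : ℝ}
    (ht : t ∈ Set.Icc (0 : ℝ) 1) :
    (t • M - (1 - t) • 1).det ≠ 0 := by
  rcases ht.1.eq_or_lt with rfl | htpos
  · simp [det_neg]
  · have : t • M - (1 - t) • 1 = t • (M - ((1 - t) / t) • 1) := by
      rw [smul_sub, smul_smul, mul_div_cancel₀ _ htpos.ne']
    rw [this, det_smul]
    exact mul_ne_zero (pow_ne_zero _ htpos.ne')
      (hH.det_sub_smul_one_ne_zero (div_nonneg (by linarith [ht.2]) htpos.le))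

theorem Metzler.exists_pos_mulVec_neg (hM : M.Metzler) (hH : M.HurwitzStable) :
    ∃ v : Fin d → ℝ, (∀ i, 0 < v i) ∧ ∀ i, (M *ᵥ v) i < 0 := by
  let B : ℝ → Matrix (Fin d) (Fin d) ℝ := fun t => t • M - (1 - t) • 1
  let b : Fin d → ℝ := fun _ => -1
  have hB : Continuous B := by fun_prop
  have hsolve : ∀ t ∈ Set.Icc (0 : ℝ) 1, B t *ᵥ ((B t)⁻¹ *ᵥ b) = b := fun t ht => by
    rw [mulVec_mulVec, mul_nonsing_inv _ (isUnit_iff_ne_zero.2 (hH.det_homotopy_ne_zero ht)),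
      one_mulVec]
  have hcont : ContinuousOn (fun t => (B t)⁻¹ *ᵥ b) (Set.Icc 0 1) := fun t ht =>
    ((continuous_id.matrix_mulVec continuous_const).continuousAt.comp
      ((continuousAt_matrix_inv _ (by
        rw [Ring.inverse_eq_inv']; exact continuousAt_inv₀ (hH.det_homotopy_ne_zero ht))).comp
        hB.continuousAt)).continuousWithinAt
  have hMetzler : ∀ t : ℝ, 0 ≤ t → (B t).Metzler := fun t ht i j hij => by
    simpa [B, one_apply_ne hij] using mul_nonneg ht (hM i j hij)
  have hstart : 0 ≤ (B 0)⁻¹ *ᵥ b := by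
    have h := hsolve 0 (by simp)
    rw [show B 0 = -1 by simp [B]] at h ⊢
    rw [neg_mulVec, one_mulVec, neg_eq_iff_eq_neg] at h
    simp [h, b, Pi.le_def]
  have : PreconnectedSpace (Set.Icc (0 : ℝ) 1) := Subtype.preconnectedSpace isPreconnected_Icc
  have hpos := pos_of_forall_nonneg_imp_pos hcont.domRestrict
    (fun t ht => (hMetzler t t.2.1).pos_of_nonneg_of_mulVec_neg ht
      (by simp [hsolve t t.2, b]))
    (x₀ := ⟨0, by simp⟩) hstart ⟨1, by simp⟩
  refine ⟨_, hpos, fun i => ?_⟩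
  have h1 := hsolve 1 (by simp)
  simp only [B, one_smul, sub_self, zero_smul, sub_zero] at h1 ⊢
  simp [h1, b]

theorem Metzler.hurwitzStable_iff_exists_pos_mulVec_neg (hM : M.Metzler) :
    M.HurwitzStable ↔ ∃ v : Fin d → ℝ, (∀ i, 0 < v i) ∧ ∀ i, (M *ᵥ v) i < 0 :=
  ⟨hM.exists_pos_mulVec_neg, fun ⟨_, hv, hMv⟩ => hM.hurwitzStable_of_mulVec_neg hv hMv⟩

theorem Metzler.hurwitzStable_of_le {N : Matrix (Fin d) (Fin d) ℝ} (hM : M.Metzler)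
    (hN : N.Metzler) (hle : ∀ i j, M i j ≤ N i j) (hH : N.HurwitzStable) : M.HurwitzStable := by
  obtain ⟨v, hv, hNv⟩ := hN.exists_pos_mulVec_neg hH
  refine hM.hurwitzStable_of_mulVec_neg hv fun i => lt_of_le_of_lt ?_ (hNv i)
  simp only [mulVec, dotProduct]
  exact Finset.sum_le_sum fun j _ => mul_le_mul_of_nonneg_right (hle i j) (hv j).le

end Matrix

theorem robust_ergodicity_tfae {d η : ℕ}
    (A : (Fin η → ℝ) → Matrix (Fin d) (Fin d) ℝ)
    (hMetzler : ∀ δ ∈ UncertaintyBox η, (A δ).Metzler)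
    (Aplus : Matrix (Fin d) (Fin d) ℝ)
    (hBound : ∀ δ ∈ UncertaintyBox η, ∀ i j, A δ i j ≤ Aplus i j)
    (hAttained : ∃ δstar ∈ UncertaintyBox η, Aplus = A δstar) :
    ((∀ δ ∈ UncertaintyBox η, (A δ).HurwitzStable) ↔ Aplus.HurwitzStable) ∧
    (Aplus.HurwitzStable ↔
      ∃ v : Fin d → ℝ, (∀ i, 0 < v i) ∧ ∀ i, Aplus.mulVec v i < 0) := by
  obtain ⟨δstar, hδstar, rfl⟩ := hAttained
  have hMetzlerPlus := hMetzler δstar hδstar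
  refine ⟨⟨fun h => h δstar hδstar, fun h δ hδ => ?_⟩,
    hMetzlerPlus.hurwitzStable_iff_exists_pos_mulVec_neg⟩
  exact (hMetzler δ hδ).hurwitzStable_of_le hMetzlerPlus (hBound δ hδ) h
end

section
/- Let A be a d×d real Metzler matrix (all off-diagonal entries nonnegative) that is Hurwitz-stable, and let b ∈ ℝ^d satisfy b_i ≥ 0 for all i with b ≠ 0. Then there exist a vector v ∈ ℝ^d with v_i > 0 for all i and constants c₁ > 0, c₂ > 0 such that for every x ∈ ℝ^d with x_i ≥ 0 for all i, xᵀ A v + bᵀ v ≤ c₁ − c₂ ⟨v, x⟩, where ⟨v, x⟩ = Σ_i v_i x_i. (This establishes the drift condition DD1 for any unimolecular reaction network whose drift has the affine form xᵀAv + bᵀv with A Hurwitz-stable.) -/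
open Matrix

open Filter Topology ENNReal Pointwise

/-!
For large `s > 0` the matrix `C = 1 + s⁻¹ • A` is entrywise nonnegative, because `A` is Metzler,
and its spectrum `1 + s⁻¹ • σ(A)` lies in the open unit disc, because `σ(A)` is a finite subset of
the open left half-plane and `‖s + μ‖ < s` once `s > ‖μ‖² / (-2 re μ)`. By Gelfand's formula the
Neumann series `∑ Cᵏ` converges to a nonnegative inverse of `1 - C` whose diagonal is at least `1`,
so `v = (1 - C)⁻¹ 𝟙` satisfies `v ≥ 1` and `A v = -s 𝟙`. For `x ≥ 0` this gives
`xᵀ A v ≤ -c ⟨v, x⟩` with `c > 0` small enough that `c vᵢ ≤ s` for all `i`, and `c₁ = ⟨b, v⟩ > 0`.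
-/

section BanachAlgebra

variable {𝔸 : Type*} [NormedRing 𝔸] [NormedAlgebra ℂ 𝔸] [CompleteSpace 𝔸]

theorem summable_pow_of_spectralRadius_lt_one {a : 𝔸} (h : spectralRadius ℂ a < 1) :
    Summable (a ^ ·) := by
  obtain ⟨r, hρr, hr1⟩ := ENNReal.lt_iff_exists_nnreal_btwn.mp h
  have hroot : ∀ᶠ n : ℕ in atTop, (‖a ^ n‖₊ : ℝ≥0∞) ^ (1 / n : ℝ) < r :=
    (spectrum.pow_nnnorm_pow_one_div_tendsto_nhds_spectralRadius a).eventually_lt_const hρr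
  refine .of_norm_bounded_eventually_nat (summable_geometric_of_lt_one r.2 (mod_cast hr1)) ?_
  filter_upwards [hroot, eventually_gt_atTop 0] with n hn hn0
  rw [one_div, ENNReal.rpow_inv_lt_iff (by positivity), ENNReal.rpow_natCast,
    ← ENNReal.coe_pow, ENNReal.coe_lt_coe] at hn
  exact_mod_cast hn.le

theorem spectralRadius_one_add_inv_smul_lt_one [Nontrivial 𝔸] {a : 𝔸} {s : ℝ} (hs : 0 < s)
    (h : ∀ μ ∈ spectrum ℂ a, ‖(s : ℂ) + μ‖ < s) :
    spectralRadius ℂ (1 + (s : ℂ)⁻¹ • a) < 1 := by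
  have hspec : spectrum ℂ (1 + (s : ℂ)⁻¹ • a) = {1} + (s : ℂ)⁻¹ • spectrum ℂ a := by
    rw [← map_one (algebraMap ℂ 𝔸), ← spectrum.singleton_add_eq,
      spectrum.smul_eq_smul _ _ (spectrum.nonempty a)]
  simpa using spectrum.spectralRadius_lt_of_forall_lt (1 + (s : ℂ)⁻¹ • a) (r := 1) <| by
    rw [hspec]
    rintro _ ⟨_, rfl, _, ⟨μ, hμ, rfl⟩, rfl⟩
    have hs' : (s : ℂ) ≠ 0 := by exact_mod_cast hs.ne'
    have : (1 : ℂ) + (s : ℂ)⁻¹ * μ = (s : ℂ)⁻¹ * (s + μ) := by field_simp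
    have hlt : ‖(1 : ℂ) + (s : ℂ)⁻¹ * μ‖ < 1 := by
      rw [this, norm_mul, norm_inv, Complex.norm_real, Real.norm_of_nonneg hs.le,
        inv_mul_lt_one₀ hs]
      exact h μ hμ
    simpa [← NNReal.coe_lt_coe] using hlt

end BanachAlgebra

theorem Complex.eventually_norm_ofReal_add_lt_s4 {μ : ℂ} (hμ : μ.re < 0) :
    ∀ᶠ s : ℝ in atTop, ‖(s : ℂ) + μ‖ < s := by
  filter_upwards [eventually_gt_atTop (‖μ‖ ^ 2 / -(2 * μ.re)), eventually_gt_atTop 0]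
    with s hs hs0
  have hsq : ‖(s : ℂ) + μ‖ ^ 2 = s ^ 2 + 2 * s * μ.re + ‖μ‖ ^ 2 := by
    simp only [Complex.sq_norm, Complex.normSq_apply, Complex.add_re, Complex.add_im,
      Complex.ofReal_re, Complex.ofReal_im]
    ring
  rw [div_lt_iff₀ (by linarith)] at hs
  exact (pow_lt_pow_iff_left₀ (norm_nonneg _) hs0.le two_ne_zero).1 (by nlinarith)

theorem exists_pos_forall_mul_le {ι : Type*} [Finite ι] {a : ι → ℝ} (ha : ∀ i, 0 < a i)
    (v : ι → ℝ) : ∃ c > 0, ∀ i, c * v i ≤ a i := by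
  have : ∀ᶠ c in 𝓝[>] (0 : ℝ), ∀ i, c * v i < a i := by
    refine nhdsWithin_le_nhds (eventually_all.2 fun i => ?_)
    exact (continuous_id.mul continuous_const).tendsto' 0 0 (by simp)
      |>.eventually_lt_const (ha i)
  obtain ⟨c, hc, hc0⟩ := (this.and self_mem_nhdsWithin).exists
  exact ⟨c, hc0, fun i => (hc i).le⟩

namespace Matrix

variable {n : Type*} [Fintype n] [DecidableEq n]

theorem summable_pow_of_summable_pow_map_ofReal {C : Matrix n n ℝ}
    (h : Summable ((C.map Complex.ofReal) ^ ·)) : Summable (C ^ ·) := by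
  have := h.map (Complex.reAddGroupHom.mapMatrix : Matrix n n ℂ →+ Matrix n n ℝ)
    (continuous_id.matrix_map Complex.continuous_re)
  convert this using 2 with k
  have hk : C.map Complex.ofReal ^ k = (C ^ k).map Complex.ofReal :=
    (C.map_pow Complex.ofRealHom k).symm
  rw [Function.comp_apply, hk]
  ext i j
  simp

theorem exists_one_le_one_sub_mulVec_eq_one {C : Matrix n n ℝ} (hC : ∀ i j, 0 ≤ C i j)
    (hsum : Summable (C ^ ·)) : ∃ v : n → ℝ, (∀ i, 1 ≤ v i) ∧ (1 - C) *ᵥ v = 1 := by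
  set T := ∑' k, C ^ k
  have hT : ∀ i j, HasSum (fun k => (C ^ k) i j) (T i j) := fun i j =>
    Pi.hasSum.1 (Pi.hasSum.1 hsum.hasSum i) j
  have hT_nonneg : ∀ i j, 0 ≤ T i j := fun i j =>
    (hT i j).nonneg fun k => pow_apply_nonneg hC k i j
  have hT_diag : ∀ i, 1 ≤ T i i := fun i => by
    simpa [(hT i i).tsum_eq] using
      (hT i i).summable.le_tsum 0 (fun k _ => pow_apply_nonneg hC k i i)
  refine ⟨T *ᵥ 1, fun i => ?_, by rw [mulVec_mulVec, hsum.one_sub_mul_tsum_pow, one_mulVec]⟩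
  calc 1 ≤ T i i := hT_diag i
    _ ≤ ∑ j, T i j := Finset.single_le_sum (fun j _ => hT_nonneg i j) (Finset.mem_univ i)
    _ = (T *ᵥ 1) i := by simp [mulVec, dotProduct]

end Matrix

theorem Matrix.Metzler.one_add_inv_smul_nonneg {d : ℕ} {A : Matrix (Fin d) (Fin d) ℝ}
    (hA : A.Metzler) {s : ℝ} (hs : 0 < s) (hdiag : ∀ i, -A i i ≤ s) (i j : Fin d) :
    0 ≤ (1 + s⁻¹ • A) i j := by
  rcases eq_or_ne i j with rfl | hij
  · have : s⁻¹ * -A i i ≤ 1 := by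
      rw [inv_mul_le_one₀ hs]; exact hdiag i
    simp only [add_apply, one_apply_eq, smul_apply, smul_eq_mul]
    linarith
  · simpa [one_apply_ne hij] using mul_nonneg (inv_nonneg.2 hs.le) (hA i j hij)

theorem Matrix.HurwitzStable.eventually_norm_ofReal_add_lt_s4 {d : ℕ}
    {A : Matrix (Fin d) (Fin d) ℝ} (hstab : A.HurwitzStable) :
    ∀ᶠ s : ℝ in atTop, ∀ μ ∈ spectrum ℂ (A.map Complex.ofReal), ‖(s : ℂ) + μ‖ < s :=
  (finite_spectrum _).eventually_all.2 fun μ hμ =>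
    Complex.eventually_norm_ofReal_add_lt_s4 (hstab μ hμ)

section

-- Any submultiplicative norm would do: it only serves to apply Gelfand's formula.
attribute [local instance] Matrix.linftyOpNormedRing Matrix.linftyOpNormedAlgebra

theorem Matrix.Metzler.exists_pos_mulVec_neg_s4 {d : ℕ} [NeZero d] {A : Matrix (Fin d) (Fin d) ℝ}
    (hA : A.Metzler) (hstab : A.HurwitzStable) :
    ∃ v : Fin d → ℝ, (∀ i, 0 < v i) ∧ ∀ i, (A *ᵥ v) i < 0 := by
  obtain ⟨s, hs, hdiag, hspec⟩ := (eventually_gt_atTop 0 |>.and <|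
    (eventually_all.2 fun i => eventually_ge_atTop (-A i i)).and
      hstab.eventually_norm_ofReal_add_lt_s4).exists
  set C := 1 + s⁻¹ • A
  have hCmap : C.map Complex.ofReal = 1 + (s : ℂ)⁻¹ • A.map Complex.ofReal := by
    ext i j
    rcases eq_or_ne i j with rfl | hij <;> simp [C, one_apply_ne, *]
  have hsum : Summable (C ^ ·) := summable_pow_of_summable_pow_map_ofReal <| hCmap ▸
    summable_pow_of_spectralRadius_lt_one (spectralRadius_one_add_inv_smul_lt_one hs hspec)
  obtain ⟨v, hv1, hv⟩ := exists_one_le_one_sub_mulVec_eq_one (hA.one_add_inv_smul_nonneg hs hdiag)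
    hsum
  have hAC : A = -s • (1 - C) := by
    rw [sub_add_cancel_left, smul_neg, smul_smul, neg_mul, neg_smul, neg_neg,
      mul_inv_cancel₀ hs.ne', one_smul]
  refine ⟨v, fun i => one_pos.trans_le (hv1 i), fun i => ?_⟩
  rw [hAC, smul_mulVec, hv]
  simpa using hs

end

/-- Drift condition **DD1** for unimolecular networks whose drift has the affine form
`xᵀ A v + bᵀ v`, when `A` is a Hurwitz-stable Metzler matrix and `b ≥ 0`, `b ≠ 0`. -/
theorem unimolecular_drift_condition {d : ℕ} (A : Matrix (Fin d) (Fin d) ℝ)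
    (hA : A.Metzler) (hstab : A.HurwitzStable)
    (b : Fin d → ℝ) (hb : ∀ i, 0 ≤ b i) (hbne : b ≠ 0) :
    ∃ v : Fin d → ℝ, (∀ i, 0 < v i) ∧ ∃ c₁ > (0 : ℝ), ∃ c₂ > (0 : ℝ),
      ∀ x : Fin d → ℝ, (∀ i, 0 ≤ x i) →
        x ⬝ᵥ A.mulVec v + b ⬝ᵥ v ≤ c₁ - c₂ * (v ⬝ᵥ x) := by
  obtain ⟨i₀, hi₀⟩ := Function.ne_iff.1 hbne
  have : NeZero d := ⟨i₀.pos.ne'⟩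
  obtain ⟨v, hv, hAv⟩ := hA.exists_pos_mulVec_neg_s4 hstab
  obtain ⟨c, hc, hcv⟩ := exists_pos_forall_mul_le (fun i => neg_pos.2 (hAv i)) v
  have hbv : 0 < b ⬝ᵥ v := Finset.sum_pos' (fun i _ => mul_nonneg (hb i) (hv i).le)
    ⟨i₀, Finset.mem_univ _, mul_pos ((hb i₀).lt_of_ne' hi₀) (hv i₀)⟩
  refine ⟨v, hv, b ⬝ᵥ v, hbv, c, hc, fun x hx => ?_⟩
  have hdrift : x ⬝ᵥ A *ᵥ v ≤ x ⬝ᵥ (-c • v) :=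
    dotProduct_le_dotProduct_of_nonneg_left (fun i => by simpa using le_neg.2 (hcv i)) hx
  rw [dotProduct_smul, smul_eq_mul, dotProduct_comm x v] at hdrift
  linarith
end

section
/- Fix α ∈ ℝ and consider the planar ODE system κ̇₁ = 1 − κ₁κ₂, κ̇₂ = 1 − κ₁κ₂ on the nonnegative quadrant. Let κ₁* = (−α + √(α² + 4))/2 and κ₂* = (α + √(α² + 4))/2. Then (i) (κ₁*, κ₂*) is the unique point (a, b) with a, b ≥ 0, b − a = α and a·b = 1 (i.e., the unique equilibrium on the invariant set {κ₂ − κ₁ = α}); and (ii) for every differentiable solution κ : [0,∞) → ℝ² with κ₁(t), κ₂(t) ≥ 0 for all t, κ₁'(t) = 1 − κ₁(t)κ₂(t), κ₂'(t) = 1 − κ₁(t)κ₂(t), and κ₂(0) − κ₁(0) = α, there exist constants C > 0 and λ > 0 such that |κ₁(t) − κ₁*| + |κ₂(t) − κ₂*| ≤ C e^{−λ t} for all t ≥ 0. In other words, the equilibrium (κ₁*, κ₂*) is globally exponentially stable. -/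
/-!
Along a solution `κ₂ - κ₁` is conserved, so `κ₂ - κ₂* = κ₁ - κ₁* =: u`, and since `κ₁* κ₂* = 1`,
`u' = κ₁* κ₂* - κ₁ κ₂ = -(κ₁ + κ₂*) u`. The rate `κ₁ + κ₂*` is at least `κ₂* > 0` because
`κ₁ ≥ 0`, so the Lyapunov function `u² e^{2 κ₂* t}` is nonincreasing and
`|u t| ≤ |u 0| e^{-κ₂* t}`.
-/

open Real Set

lemma abs_lt_sqrt_sq_add_four (α : ℝ) : |α| < √(α ^ 2 + 4) := by
  rw [← sqrt_sq_eq_abs]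
  exact sqrt_lt_sqrt (sq_nonneg α) (by linarith)

lemma neg_add_sqrt_sq_add_four_mul_add_sqrt_sq_add_four (α : ℝ) :
    (-α + √(α ^ 2 + 4)) / 2 * ((α + √(α ^ 2 + 4)) / 2) = 1 := by
  linear_combination sq_sqrt (show (0 : ℝ) ≤ α ^ 2 + 4 by positivity) / 4

lemma eq_of_mul_eq_mul_of_sub_eq_sub {a b a' b' : ℝ} (ha : 0 ≤ a) (hb' : 0 < b')
    (hsub : b - a = b' - a') (hmul : a * b = a' * b') : a = a' := by
  have h : (a - a') * (a + b') = 0 := by linear_combination hmul - a * hsub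
  rcases mul_eq_zero.mp h with h | h <;> linarith

lemma sub_eq_sub_of_hasDerivWithinAt_Ici {f g f' : ℝ → ℝ} {a : ℝ}
    (hf : ∀ t ∈ Ici a, HasDerivWithinAt f (f' t) (Ici a) t)
    (hg : ∀ t ∈ Ici a, HasDerivWithinAt g (f' t) (Ici a) t) :
    ∀ t ∈ Ici a, g t - f t = g a - f a := by
  intro t ht
  have hcont : ContinuousOn (g - f) (Icc a t) := fun x hx =>
    ((hg x hx.1).sub (hf x hx.1)).continuousWithinAt.mono Icc_subset_Ici_self
  have hderiv : ∀ x ∈ Ico a t, HasDerivWithinAt (g - f) 0 (Ici x) x := fun x hx => by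
    simpa only [sub_self] using ((hg x hx.1).sub (hf x hx.1)).mono (Ici_subset_Ici.2 hx.1)
  exact constant_of_has_deriv_right_zero hcont hderiv t ⟨ht, le_rfl⟩

theorem abs_le_mul_exp_of_hasDerivWithinAt_neg_mul {u a : ℝ → ℝ} {μ : ℝ}
    (hu : ∀ t ∈ Ici (0 : ℝ), HasDerivWithinAt u (-(a t * u t)) (Ici 0) t)
    (ha : ∀ t ∈ Ici (0 : ℝ), μ ≤ a t) :
    ∀ t ∈ Ici (0 : ℝ), |u t| ≤ |u 0| * exp (-μ * t) := by
  set g : ℝ → ℝ := fun t => u t ^ 2 * exp (2 * μ * t)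
  have hg : ∀ t ∈ Ici (0 : ℝ), HasDerivWithinAt g (-2 * (a t - μ) * g t) (Ici 0) t := by
    intro t ht
    have hexp := (((hasDerivAt_id t).const_mul (2 * μ)).exp).hasDerivWithinAt (s := Ici 0)
    exact (((hu t ht).fun_pow 2).mul hexp).congr_deriv (by simp only [g, id]; ring)
  have hg_anti : AntitoneOn g (Ici 0) := by
    refine antitoneOn_of_hasDerivWithinAt_nonpos (f' := fun t => -2 * (a t - μ) * g t)
      (convex_Ici 0) (fun t ht => (hg t ht).continuousWithinAt) (fun t ht => ?_) (fun t ht => ?_)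
    · rw [interior_Ici] at ht ⊢
      exact ((hg t (mem_Ici.2 ht.le)).hasDerivAt (Ici_mem_nhds ht)).hasDerivWithinAt
    · rw [interior_Ici] at ht
      have : 0 ≤ g t := by positivity
      nlinarith [ha t (mem_Ici.2 ht.le)]
  intro t ht
  have hgt : (|u t| * exp (μ * t)) ^ 2 ≤ |u 0| ^ 2 := by
    have := hg_anti self_mem_Ici ht ht
    simp only [g, mul_zero, exp_zero, mul_one] at this
    rwa [mul_pow, sq_abs, sq_abs, ← exp_nat_mul, Nat.cast_ofNat, ← mul_assoc]
  have hdecay := (pow_le_pow_iff_left₀ (by positivity) (abs_nonneg _) two_ne_zero).mp hgt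
  calc |u t| = |u t| * exp (μ * t) * exp (-μ * t) := by
        rw [mul_assoc, ← exp_add, neg_mul, add_neg_cancel, exp_zero, mul_one]
    _ ≤ |u 0| * exp (-μ * t) := by gcongr

/-- The deterministic model of the network `∅ → X₁`, `∅ → X₂`, `X₁ + X₂ → ∅`:
the equilibrium `(κ₁*, κ₂*)` is the unique equilibrium on the invariant set
`{κ₂ - κ₁ = α}` and it is globally exponentially stable. -/
theorem integrator_network_deterministic_global_exponential_stability (α : ℝ) :
    let κ₁s : ℝ := (-α + Real.sqrt (α ^ 2 + 4)) / 2
    let κ₂s : ℝ := (α + Real.sqrt (α ^ 2 + 4)) / 2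
    -- (i) (κ₁*, κ₂*) is the unique point (a, b) with a, b ≥ 0, b - a = α and a * b = 1
    (0 ≤ κ₁s ∧ 0 ≤ κ₂s ∧ κ₂s - κ₁s = α ∧ κ₁s * κ₂s = 1) ∧
    (∀ a b : ℝ, 0 ≤ a → 0 ≤ b → b - a = α → a * b = 1 → a = κ₁s ∧ b = κ₂s) ∧
    -- (ii) global exponential stability
    (∀ κ₁ κ₂ : ℝ → ℝ,
      (∀ t ∈ Set.Ici (0 : ℝ), 0 ≤ κ₁ t ∧ 0 ≤ κ₂ t) →
      (∀ t ∈ Set.Ici (0 : ℝ),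
        HasDerivWithinAt κ₁ (1 - κ₁ t * κ₂ t) (Set.Ici (0 : ℝ)) t) →
      (∀ t ∈ Set.Ici (0 : ℝ),
        HasDerivWithinAt κ₂ (1 - κ₁ t * κ₂ t) (Set.Ici (0 : ℝ)) t) →
      κ₂ 0 - κ₁ 0 = α →
      ∃ C > (0 : ℝ), ∃ lam > (0 : ℝ), ∀ t ∈ Set.Ici (0 : ℝ),
        |κ₁ t - κ₁s| + |κ₂ t - κ₂s| ≤ C * Real.exp (-lam * t)) := by
  intro κ₁s κ₂s
  have hα := abs_lt_sqrt_sq_add_four α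
  have hκ₁s : 0 < κ₁s := show 0 < (-α + √(α ^ 2 + 4)) / 2 by linarith [le_abs_self α]
  have hκ₂s : 0 < κ₂s := show 0 < (α + √(α ^ 2 + 4)) / 2 by linarith [neg_abs_le α]
  have hsub : κ₂s - κ₁s = α := by ring
  have hmul : κ₁s * κ₂s = 1 := neg_add_sqrt_sq_add_four_mul_add_sqrt_sq_add_four α
  refine ⟨⟨hκ₁s.le, hκ₂s.le, hsub, hmul⟩, fun a b ha _ hba hab => ?_, ?_⟩
  · have : a = κ₁s :=
      eq_of_mul_eq_mul_of_sub_eq_sub ha hκ₂s (hba.trans hsub.symm) (hab.trans hmul.symm)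
    exact ⟨this, by linarith⟩
  intro κ₁ κ₂ hnn h₁ h₂ h0
  have hshift : ∀ t ∈ Ici (0 : ℝ), κ₂ t - κ₂s = κ₁ t - κ₁s := fun t ht => by
    linarith [sub_eq_sub_of_hasDerivWithinAt_Ici h₁ h₂ t ht]
  have hu : ∀ t ∈ Ici (0 : ℝ), HasDerivWithinAt (fun t => κ₁ t - κ₁s)
      (-((κ₁ t + κ₂s) * (κ₁ t - κ₁s))) (Ici 0) t := fun t ht =>
    ((h₁ t ht).sub_const κ₁s).congr_deriv <| by
      linear_combination -κ₁ t * hshift t ht - hmul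
  have hrate : ∀ t ∈ Ici (0 : ℝ), κ₂s ≤ κ₁ t + κ₂s := fun t ht => by linarith [(hnn t ht).1]
  have hdecay := abs_le_mul_exp_of_hasDerivWithinAt_neg_mul hu hrate
  refine ⟨2 * |κ₁ 0 - κ₁s| + 1, by positivity, κ₂s, hκ₂s, fun t ht => ?_⟩
  rw [hshift t ht]
  nlinarith [hdecay t ht, exp_pos (-κ₂s * t)]
end

section
/- Consider the reaction network ∅ → X₁ (propensity 1), ∅ → X₂ (propensity 1), X₁ + X₂ → ∅ (propensity x₁x₂ in state x = (x₁,x₂)). Its Chemical Master Equation for a family p : [0,∞) → (ℕ² → ℝ) reads, for each y = (y₁,y₂) ∈ ℕ²: dp(t,y)/dt = p(t,(y₁−1,y₂)) + p(t,(y₁,y₂−1)) + (y₁+1)(y₂+1)·p(t,(y₁+1,y₂+1)) − (2 + y₁y₂)·p(t,y), where terms with a negative coordinate are taken to be zero. Suppose p(t,y) ≥ 0 for all t, y; Σ_y p(t,y) = 1 for all t; t ↦ p(t,y) is differentiable and satisfies the above equation for every y; the sums g(t) = Σ_y (y₁ − y₂) p(t,y) and h(t) = Σ_y (y₁ − y₂)²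 p(t,y) converge absolutely for each t, are differentiable in t, and their derivatives are obtained by term-wise differentiation. If g(0) = α and h(0) = α², then g(t) = α and h(t) = α² + 2t for all t ≥ 0. In particular, the second moments of the solution of this Chemical Master Equation grow unboundedly with time. -/
/-!
If a bounded weight `w` on `ℕ²` depends only on `y₁ - y₂`, the annihilation reaction does not
change it, and integrating the master equation over the boxes `[0, N]²` gives Dynkin's formula
`E_t w - E_0 w = ∫₀ᵗ E_s [w (y + e₁) + w (y + e₂) - 2 w y] ds`. Passing to the limit `N → ∞`, the
only boundary term that is not the tail of a convergent series is the annihilation flux out of the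
box; it is dominated by the flux for `w = 1`, which must vanish because total mass is conserved.

For `w = min ((y₁ - y₂ - c)², (R + 1)²)` the bracket is `2` where `|y₁ - y₂ - c| ≤ R` and is never
below `-(4R + 6)`. Hence `E_t (y₁ - y₂ - c)² - E_0 (y₁ - y₂ - c)² ≤ 2t`, so the second moment stays
bounded on `[0, t]`; Chebyshev's inequality then makes the truncation error `O(1/R)` and the
difference is exactly `2t`. The cases `c = 0` and `c = 1` give both moment identities.
-/

open Filter Set Topology MeasureTheory

namespace IntegratorCME

def cmeRHS (q : ℕ × ℕ → ℝ) (y : ℕ × ℕ) : ℝ :=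
  (if y.1 = 0 then 0 else q (y.1 - 1, y.2)) +
  (if y.2 = 0 then 0 else q (y.1, y.2 - 1)) +
  ((y.1 : ℝ) + 1) * ((y.2 : ℝ) + 1) * q (y.1 + 1, y.2 + 1) -
  (2 + (y.1 : ℝ) * (y.2 : ℝ)) * q y

structure IsSolution (p dp : ℝ → ℕ × ℕ → ℝ) : Prop where
  nonneg : ∀ t ∈ Ici (0 : ℝ), ∀ y, 0 ≤ p t y
  hasSum_one : ∀ t ∈ Ici (0 : ℝ), HasSum (p t) 1
  hasDerivWithinAt : ∀ y, ∀ t ∈ Ici (0 : ℝ),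
    HasDerivWithinAt (fun s => p s y) (dp t y) (Ici 0) t
  cme : ∀ t ∈ Ici (0 : ℝ), ∀ y, dp t y = cmeRHS (p t) y

/-- The backward generator of the network on weights with `w (a + 1, b + 1) = w (a, b)`, on which
the annihilation reaction acts trivially. -/
def birthGenerator (w : ℕ × ℕ → ℝ) (y : ℕ × ℕ) : ℝ :=
  w (y.1 + 1, y.2) + w (y.1, y.2 + 1) - 2 * w y

def box (N : ℕ) : Finset (ℕ × ℕ) := Finset.range (N + 1) ×ˢ Finset.range (N + 1)

/-- The birth terms of `∑ y ∈ box N, w y * cmeRHS q y`, after shifting the summation index. -/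
def birthBoxSum (w q : ℕ × ℕ → ℝ) (N : ℕ) : ℝ :=
  ∑ z ∈ Finset.range N ×ˢ Finset.range (N + 1), w (z.1 + 1, z.2) * q z +
  ∑ z ∈ Finset.range (N + 1) ×ˢ Finset.range N, w (z.1, z.2 + 1) * q z -
  2 * ∑ z ∈ box N, w z * q z

def annihilationFlux (w q : ℕ × ℕ → ℝ) (N : ℕ) : ℝ :=
  ∑ z ∈ box N, w z * ((z.1 : ℝ) * z.2) * q z

theorem sum_box_mul_cmeRHS {w : ℕ × ℕ → ℝ} (hw : ∀ a b, w (a + 1, b + 1) = w (a, b))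
    (q : ℕ × ℕ → ℝ) (N : ℕ) :
    ∑ y ∈ box N, w y * cmeRHS q y =
      birthBoxSum w q N + (annihilationFlux w q (N + 1) - annihilationFlux w q N) := by
  have birth₁ : ∑ y ∈ box N, w y * (if y.1 = 0 then 0 else q (y.1 - 1, y.2)) =
      ∑ z ∈ Finset.range N ×ˢ Finset.range (N + 1), w (z.1 + 1, z.2) * q z := by
    rw [box, Finset.sum_product, Finset.sum_product, Finset.sum_range_succ']
    simp
  have birth₂ : ∑ y ∈ box N, w y * (if y.2 = 0 then 0 else q (y.1, y.2 - 1)) =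
      ∑ z ∈ Finset.range (N + 1) ×ˢ Finset.range N, w (z.1, z.2 + 1) * q z := by
    rw [box, Finset.sum_product, Finset.sum_product]
    refine Finset.sum_congr rfl fun i _ => ?_
    rw [Finset.sum_range_succ']
    simp
  -- `z ↦ z.1 * z.2` vanishes on the two edges `z.1 = 0`, `z.2 = 0` of `box (N + 1)`
  have annihilation :
      ∑ y ∈ box N, w y * (((y.1 : ℝ) + 1) * ((y.2 : ℝ) + 1) * q (y.1 + 1, y.2 + 1)) =
        annihilationFlux w q (N + 1) := by
    symm
    rw [annihilationFlux, box, Finset.sum_product, Finset.sum_range_succ']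
    simp only [Nat.cast_zero, zero_mul, mul_zero, Finset.sum_const_zero, add_zero]
    rw [box, Finset.sum_product]
    refine Finset.sum_congr rfl fun i _ => ?_
    rw [Finset.sum_range_succ']
    simp only [Nat.cast_zero, mul_zero, zero_mul, add_zero, hw, Nat.cast_add, Nat.cast_one]
    exact Finset.sum_congr rfl fun j _ => by ring
  have loss : ∑ y ∈ box N, w y * ((2 + (y.1 : ℝ) * (y.2 : ℝ)) * q y) =
      2 * ∑ z ∈ box N, w z * q z + annihilationFlux w q N := by
    rw [annihilationFlux, Finset.mul_sum, ← Finset.sum_add_distrib]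
    exact Finset.sum_congr rfl fun y _ => by ring
  have split : ∀ y, w y * cmeRHS q y =
      w y * (if y.1 = 0 then 0 else q (y.1 - 1, y.2)) +
      w y * (if y.2 = 0 then 0 else q (y.1, y.2 - 1)) +
      w y * (((y.1 : ℝ) + 1) * ((y.2 : ℝ) + 1) * q (y.1 + 1, y.2 + 1)) -
      w y * ((2 + (y.1 : ℝ) * (y.2 : ℝ)) * q y) := fun y => by rw [cmeRHS]; ring
  simp only [split, Finset.sum_sub_distrib, Finset.sum_add_distrib, birth₁, birth₂, annihilation,
    loss, birthBoxSum]
  ring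

section Summation

variable {α : Type*} {q u : α → ℝ} {C : ℝ}

theorem summable_mul_of_abs_le (hq0 : ∀ a, 0 ≤ q a) (hq : Summable q) (hu : ∀ a, |u a| ≤ C) :
    Summable fun a => u a * q a :=
  (hq.mul_left C).of_norm_bounded fun a => by
    rw [Real.norm_eq_abs, abs_mul, abs_of_nonneg (hq0 a)]
    exact mul_le_mul_of_nonneg_right (hu a) (hq0 a)

theorem abs_sum_mul_le (hq0 : ∀ a, 0 ≤ q a) (hq1 : HasSum q 1) (hu : ∀ a, |u a| ≤ C)
    (hC : 0 ≤ C) (A : Finset α) : |∑ a ∈ A, u a * q a| ≤ C :=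
  calc |∑ a ∈ A, u a * q a| ≤ ∑ a ∈ A, C * q a :=
        (Finset.abs_sum_le_sum_abs _ _).trans <| Finset.sum_le_sum fun a _ => by
          rw [abs_mul, abs_of_nonneg (hq0 a)]
          exact mul_le_mul_of_nonneg_right (hu a) (hq0 a)
    _ = C * ∑ a ∈ A, q a := (Finset.mul_sum _ _ _).symm
    _ ≤ C * 1 := by
        gcongr
        exact hq1.tsum_eq ▸ hq1.summable.sum_le_tsum A fun a _ => hq0 a
    _ = C := mul_one C

end Summation

theorem tendsto_sum_range_prod_range {M : Type*} [AddCommMonoid M] [TopologicalSpace M]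
    {v : ℕ × ℕ → M} (hv : Summable v) {a b : ℕ → ℕ} (ha : Tendsto a atTop atTop)
    (hb : Tendsto b atTop atTop) :
    Tendsto (fun N => ∑ z ∈ Finset.range (a N) ×ˢ Finset.range (b N), v z) atTop
      (𝓝 (∑' z, v z)) := by
  have hrect : Tendsto (fun N => Finset.range (a N) ×ˢ Finset.range (b N)) atTop atTop := by
    refine tendsto_finsetProd_atTop.comp (f := fun N => (Finset.range (a N), Finset.range (b N))) ?_
    rw [← prod_atTop_atTop_eq]
    exact (tendsto_finset_range.comp ha).prodMk (tendsto_finset_range.comp hb)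
  exact hv.hasSum.comp hrect

theorem tendsto_sum_box {M : Type*} [AddCommMonoid M] [TopologicalSpace M] {v : ℕ × ℕ → M}
    (hv : Summable v) :
    Tendsto (fun N => ∑ z ∈ box N, v z) atTop (𝓝 (∑' z, v z)) :=
  tendsto_sum_range_prod_range hv (tendsto_add_atTop_nat 1) (tendsto_add_atTop_nat 1)

section BoundedWeight

variable {w q : ℕ × ℕ → ℝ} {C : ℝ}

theorem abs_birthBoxSum_le (hC : ∀ y, |w y| ≤ C) (hq0 : ∀ y, 0 ≤ q y) (hq1 : HasSum q 1) (N : ℕ) :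
    |birthBoxSum w q N| ≤ 4 * C := by
  have hC0 : 0 ≤ C := (abs_nonneg _).trans (hC 0)
  have h₁ := abs_sum_mul_le (u := fun z => w (z.1 + 1, z.2)) hq0 hq1 (fun z => hC _) hC0
    (Finset.range N ×ˢ Finset.range (N + 1))
  have h₂ := abs_sum_mul_le (u := fun z => w (z.1, z.2 + 1)) hq0 hq1 (fun z => hC _) hC0
    (Finset.range (N + 1) ×ˢ Finset.range N)
  have h₃ := abs_sum_mul_le hq0 hq1 hC hC0 (box N)
  rw [birthBoxSum, abs_le] at *
  constructor <;> linarith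

theorem tendsto_birthBoxSum (hC : ∀ y, |w y| ≤ C) (hq0 : ∀ y, 0 ≤ q y) (hq : Summable q) :
    Tendsto (fun N => birthBoxSum w q N) atTop (𝓝 (∑' y, birthGenerator w y * q y)) := by
  have h₁ := summable_mul_of_abs_le (u := fun z => w (z.1 + 1, z.2)) hq0 hq fun z => hC _
  have h₂ := summable_mul_of_abs_le (u := fun z => w (z.1, z.2 + 1)) hq0 hq fun z => hC _
  have h₃ := summable_mul_of_abs_le hq0 hq hC
  have hsum : ∑' y, birthGenerator w y * q y =
      ∑' z, w (z.1 + 1, z.2) * q z + ∑' z, w (z.1, z.2 + 1) * q z - 2 * ∑' z, w z * q z := by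
    rw [← h₁.tsum_add h₂, ← tsum_mul_left, ← (h₁.add h₂).tsum_sub (h₃.mul_left 2)]
    exact tsum_congr fun y => by rw [birthGenerator]; ring
  rw [hsum]
  exact ((tendsto_sum_range_prod_range h₁ tendsto_id (tendsto_add_atTop_nat 1)).add
    (tendsto_sum_range_prod_range h₂ (tendsto_add_atTop_nat 1) tendsto_id)).sub
    ((tendsto_sum_box h₃).const_mul 2)

theorem abs_annihilationFlux_sub_le (hC : ∀ y, |w y| ≤ C) (hq0 : ∀ y, 0 ≤ q y) (N : ℕ) :
    |annihilationFlux w q (N + 1) - annihilationFlux w q N| ≤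
      C * (annihilationFlux (fun _ => 1) q (N + 1) - annihilationFlux (fun _ => 1) q N) := by
  have hsub : box N ⊆ box (N + 1) :=
    Finset.product_subset_product (Finset.range_subset_range.2 (by omega))
      (Finset.range_subset_range.2 (by omega))
  simp only [annihilationFlux, ← Finset.sum_sdiff_eq_sub hsub, Finset.mul_sum]
  refine (Finset.abs_sum_le_sum_abs _ _).trans (Finset.sum_le_sum fun z _ => ?_)
  have hz : (0 : ℝ) ≤ z.1 * z.2 := by positivity
  rw [abs_mul, abs_mul, abs_of_nonneg hz, abs_of_nonneg (hq0 z), one_mul, ← mul_assoc C]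
  exact mul_le_mul_of_nonneg_right (mul_le_mul_of_nonneg_right (hC z) hz) (hq0 z)

end BoundedWeight

namespace IsSolution

variable {p dp : ℝ → ℕ × ℕ → ℝ} {w : ℕ × ℕ → ℝ} {C t : ℝ}

theorem continuousOn_sum_mul (hp : IsSolution p dp) (u : ℕ × ℕ → ℝ) (A : Finset (ℕ × ℕ)) :
    ContinuousOn (fun s => ∑ y ∈ A, u y * p s y) (Ici 0) :=
  continuousOn_finsetSum A fun y _ =>
    continuousOn_const.mul fun s hs => (hp.hasDerivWithinAt y s hs).continuousWithinAt

theorem continuousOn_birthBoxSum (hp : IsSolution p dp) (w : ℕ × ℕ → ℝ) (N : ℕ) :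
    ContinuousOn (fun s => birthBoxSum w (p s) N) (Ici 0) :=
  ((hp.continuousOn_sum_mul (fun z => w (z.1 + 1, z.2)) _).add
    (hp.continuousOn_sum_mul (fun z => w (z.1, z.2 + 1)) _)).sub
    (continuousOn_const.mul (hp.continuousOn_sum_mul w _))

theorem continuousOn_annihilationFlux (hp : IsSolution p dp) (w : ℕ × ℕ → ℝ) (N : ℕ) :
    ContinuousOn (fun s => annihilationFlux w (p s) N) (Ici 0) :=
  hp.continuousOn_sum_mul (fun z => w z * ((z.1 : ℝ) * z.2)) _

theorem sum_box_sub_eq_integral (hp : IsSolution p dp) (hw : ∀ a b, w (a + 1, b + 1) = w (a, b))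
    (ht : 0 ≤ t) (N : ℕ) :
    ∑ y ∈ box N, w y * p t y - ∑ y ∈ box N, w y * p 0 y =
      (∫ s in 0..t, birthBoxSum w (p s) N) +
        ∫ s in 0..t, (annihilationFlux w (p s) (N + 1) - annihilationFlux w (p s) N) := by
  have hB := hp.continuousOn_birthBoxSum w N
  have hΦ := (hp.continuousOn_annihilationFlux w (N + 1)).fun_sub
    (hp.continuousOn_annihilationFlux w N)
  rw [← intervalIntegral.integral_add ((hB.mono Icc_subset_Ici_self).intervalIntegrable_of_Icc ht)
    ((hΦ.mono Icc_subset_Ici_self).intervalIntegrable_of_Icc ht)]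
  refine (intervalIntegral.integral_eq_sub_of_hasDeriv_right_of_le ht
    ((hp.continuousOn_sum_mul w _).mono Icc_subset_Ici_self) (fun s hs => ?_)
    (((hB.fun_add hΦ).mono Icc_subset_Ici_self).intervalIntegrable_of_Icc ht)).symm
  have hs : s ∈ Ici (0 : ℝ) := hs.1.le
  rw [← sum_box_mul_cmeRHS hw]
  simp only [← hp.cme s hs]
  exact (HasDerivWithinAt.fun_sum fun y _ => (hp.hasDerivWithinAt y s hs).const_mul (w y)).mono
    (Ioi_subset_Ici hs)

theorem tendsto_integral_birthBoxSum (hp : IsSolution p dp) (hC : ∀ y, |w y| ≤ C) (ht : 0 ≤ t) :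
    Tendsto (fun N => ∫ s in 0..t, birthBoxSum w (p s) N) atTop
      (𝓝 (∫ s in 0..t, ∑' y, birthGenerator w y * p s y)) := by
  have hIoc : uIoc 0 t ⊆ Ici 0 := by
    rw [uIoc_of_le ht]
    exact Ioc_subset_Icc_self.trans Icc_subset_Ici_self
  refine intervalIntegral.tendsto_integral_filter_of_dominated_convergence (fun _ => 4 * C)
    (.of_forall fun N => ((hp.continuousOn_birthBoxSum w N).mono hIoc).aestronglyMeasurable
      measurableSet_uIoc)
    (.of_forall fun N => .of_forall fun s hs =>
      abs_birthBoxSum_le hC (hp.nonneg s (hIoc hs)) (hp.hasSum_one s (hIoc hs)) N)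
    intervalIntegrable_const (.of_forall fun s hs => ?_)
  exact tendsto_birthBoxSum hC (hp.nonneg s (hIoc hs)) (hp.hasSum_one s (hIoc hs)).summable

theorem intervalIntegrable_tsum_birthGenerator (hp : IsSolution p dp) (hC : ∀ y, |w y| ≤ C)
    (ht : 0 ≤ t) :
    IntervalIntegrable (fun s => ∑' y, birthGenerator w y * p s y) volume 0 t := by
  have hIoc : Ioc 0 t ⊆ Ici 0 := Ioc_subset_Icc_self.trans Icc_subset_Ici_self
  have hlim : ∀ s ∈ Ioc 0 t, Tendsto (fun N => birthBoxSum w (p s) N) atTop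
      (𝓝 (∑' y, birthGenerator w y * p s y)) := fun s hs =>
    tendsto_birthBoxSum hC (hp.nonneg s (hIoc hs)) (hp.hasSum_one s (hIoc hs)).summable
  rw [intervalIntegrable_iff_integrableOn_Ioc_of_le ht]
  refine Integrable.of_bound
    (aestronglyMeasurable_of_tendsto_ae (μ := volume.restrict (Ioc 0 t)) atTop (fun N =>
      ((hp.continuousOn_birthBoxSum w N).mono hIoc).aestronglyMeasurable measurableSet_Ioc)
      (ae_restrict_of_forall_mem measurableSet_Ioc hlim))
    (4 * C) (ae_restrict_of_forall_mem measurableSet_Ioc fun s hs => ?_)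
  exact le_of_tendsto' (hlim s hs).norm fun N =>
    abs_birthBoxSum_le hC (hp.nonneg s (hIoc hs)) (hp.hasSum_one s (hIoc hs)) N

theorem tendsto_integral_annihilationFlux_one (hp : IsSolution p dp) (ht : 0 ≤ t) :
    Tendsto (fun N => ∫ s in 0..t,
      (annihilationFlux (fun _ => 1) (p s) (N + 1) - annihilationFlux (fun _ => 1) (p s) N))
      atTop (𝓝 0) := by
  have hmass : ∀ s ∈ Ici (0 : ℝ), Tendsto (fun N => ∑ y ∈ box N, 1 * p s y) atTop (𝓝 1) :=
    fun s hs => by simpa only [one_mul, (hp.hasSum_one s hs).tsum_eq] using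
      tendsto_sum_box (hp.hasSum_one s hs).summable
  have hgen : ∀ y, birthGenerator (fun _ => 1) y = 0 := fun y => by norm_num [birthGenerator]
  have hbirth := hp.tendsto_integral_birthBoxSum (w := fun _ => 1) (C := 1) (by simp) ht
  simp only [hgen, zero_mul, tsum_zero, intervalIntegral.integral_zero] at hbirth
  simpa only [hp.sum_box_sub_eq_integral (w := fun _ => 1) (fun _ _ => rfl) ht,
    add_sub_cancel_left, sub_self] using ((hmass t ht).sub (hmass 0 self_mem_Ici)).sub hbirth

theorem tendsto_integral_annihilationFlux (hp : IsSolution p dp) (hC : ∀ y, |w y| ≤ C)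
    (ht : 0 ≤ t) :
    Tendsto (fun N => ∫ s in 0..t, (annihilationFlux w (p s) (N + 1) - annihilationFlux w (p s) N))
      atTop (𝓝 0) := by
  refine squeeze_zero_norm (fun N => ?_) (by
    simpa using (hp.tendsto_integral_annihilationFlux_one ht).const_mul C)
  have hΦ : ∀ w : ℕ × ℕ → ℝ, IntervalIntegrable
      (fun s => annihilationFlux w (p s) (N + 1) - annihilationFlux w (p s) N) volume 0 t :=
    fun w => (((hp.continuousOn_annihilationFlux w (N + 1)).fun_sub
      (hp.continuousOn_annihilationFlux w N)).mono Icc_subset_Ici_self).intervalIntegrable_of_Icc ht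
  rw [Real.norm_eq_abs, ← intervalIntegral.integral_const_mul]
  exact (intervalIntegral.abs_integral_le_integral_abs ht).trans <|
    intervalIntegral.integral_mono_on ht (hΦ w).abs ((hΦ _).const_mul C) fun s hs =>
      abs_annihilationFlux_sub_le hC (hp.nonneg s hs.1) N

theorem tsum_sub_tsum_eq_integral (hp : IsSolution p dp) (hw : ∀ a b, w (a + 1, b + 1) = w (a, b))
    (hC : ∀ y, |w y| ≤ C) (ht : 0 ≤ t) :
    ∑' y, w y * p t y - ∑' y, w y * p 0 y = ∫ s in 0..t, ∑' y, birthGenerator w y * p s y := by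
  have hmoment : ∀ s ∈ Ici (0 : ℝ),
      Tendsto (fun N => ∑ y ∈ box N, w y * p s y) atTop (𝓝 (∑' y, w y * p s y)) := fun s hs =>
    tendsto_sum_box (summable_mul_of_abs_le (hp.nonneg s hs) (hp.hasSum_one s hs).summable hC)
  refine tendsto_nhds_unique ((hmoment t ht).sub (hmoment 0 self_mem_Ici)) ?_
  simpa only [hp.sum_box_sub_eq_integral hw ht, add_zero] using
    (hp.tendsto_integral_birthBoxSum hC ht).add (hp.tendsto_integral_annihilationFlux hC ht)

theorem tsum_sub_tsum_le (hp : IsSolution p dp) (hw : ∀ a b, w (a + 1, b + 1) = w (a, b))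
    (hC : ∀ y, |w y| ≤ C) (ht : 0 ≤ t) {b : ℝ}
    (hb : ∀ s ∈ Icc 0 t, ∑' y, birthGenerator w y * p s y ≤ b) :
    ∑' y, w y * p t y - ∑' y, w y * p 0 y ≤ b * t := by
  rw [hp.tsum_sub_tsum_eq_integral hw hC ht]
  calc _ ≤ ∫ _ in 0..t, b := intervalIntegral.integral_mono_on ht
        (hp.intervalIntegrable_tsum_birthGenerator hC ht) intervalIntegrable_const hb
    _ = b * t := by simp [mul_comm]

theorem le_tsum_sub_tsum (hp : IsSolution p dp) (hw : ∀ a b, w (a + 1, b + 1) = w (a, b))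
    (hC : ∀ y, |w y| ≤ C) (ht : 0 ≤ t) {a : ℝ}
    (ha : ∀ s ∈ Icc 0 t, a ≤ ∑' y, birthGenerator w y * p s y) :
    a * t ≤ ∑' y, w y * p t y - ∑' y, w y * p 0 y := by
  rw [hp.tsum_sub_tsum_eq_integral hw hC ht]
  calc a * t = ∫ _ in 0..t, a := by simp [mul_comm]
    _ ≤ _ := intervalIntegral.integral_mono_on ht intervalIntegrable_const
        (hp.intervalIntegrable_tsum_birthGenerator hC ht) ha

end IsSolution

def truncSq (r x : ℝ) : ℝ := min (x ^ 2) (r ^ 2)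

section TruncatedSquare

variable {r x y : ℝ}

theorem truncSq_nonneg : 0 ≤ truncSq r x := le_min (sq_nonneg x) (sq_nonneg r)

theorem abs_truncSq_le : |truncSq r x| ≤ r ^ 2 := by
  rw [abs_of_nonneg truncSq_nonneg]; exact min_le_right _ _

theorem truncSq_of_abs_le (h : |x| ≤ r) : truncSq r x = x ^ 2 :=
  min_eq_left (sq_le_sq' (abs_le.1 h).1 (abs_le.1 h).2)

theorem truncSq_secondDiff_le : truncSq r (x + 1) + truncSq r (x - 1) - 2 * truncSq r x ≤ 2 := by
  have hup : truncSq r (x + 1) ≤ (x + 1) ^ 2 := min_le_left _ _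
  have hdown : truncSq r (x - 1) ≤ (x - 1) ^ 2 := min_le_left _ _
  have hup' : truncSq r (x + 1) ≤ r ^ 2 := min_le_right _ _
  have hdown' : truncSq r (x - 1) ≤ r ^ 2 := min_le_right _ _
  rcases min_cases (x ^ 2) (r ^ 2) with ⟨hx, -⟩ | ⟨hx, -⟩ <;>
    rw [show truncSq r x = _ from hx] <;> nlinarith

theorem truncSq_sub_truncSq_le (hr : 0 ≤ r) (hxy : |x - y| ≤ 1) :
    truncSq r x - truncSq r y ≤ 2 * r + 1 := by
  have hx : truncSq r x ≤ x ^ 2 := min_le_left _ _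
  have hx' : truncSq r x ≤ r ^ 2 := min_le_right _ _
  rcases le_total (y ^ 2) (r ^ 2) with hyr | hyr
  · rw [show truncSq r y = y ^ 2 from min_eq_left hyr]
    obtain ⟨hy₁, hy₂⟩ := abs_le_of_sq_le_sq' hyr hr
    obtain ⟨hxy₁, hxy₂⟩ := abs_le.1 hxy
    nlinarith
  · rw [show truncSq r y = r ^ 2 from min_eq_right hyr]
    linarith

theorem truncSq_secondDiff_ge {R : ℝ} (hR : 0 ≤ R) :
    2 - (4 * R + 8) * (if R < |x| then 1 else 0) ≤
      truncSq (R + 1) (x + 1) + truncSq (R + 1) (x - 1) - 2 * truncSq (R + 1) x := by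
  split_ifs with hx
  · have hup := truncSq_sub_truncSq_le (r := R + 1) (x := x) (y := x + 1) (by linarith) (by simp)
    have hdown := truncSq_sub_truncSq_le (r := R + 1) (x := x) (y := x - 1) (by linarith) (by simp)
    have := @truncSq_nonneg (R + 1) (x + 1)
    linarith
  · obtain ⟨hx₁, hx₂⟩ := abs_le.1 (not_lt.1 hx)
    rw [truncSq_of_abs_le (abs_le.2 ⟨by linarith, by linarith⟩),
      truncSq_of_abs_le (abs_le.2 ⟨by linarith, by linarith⟩),
      truncSq_of_abs_le (abs_le.2 ⟨by linarith, by linarith⟩)]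
    nlinarith

end TruncatedSquare

section TruncatedMoments

variable {α : Type*} {q : α → ℝ} (x : α → ℝ)

theorem sq_mul_tsum_indicator_le (hq0 : ∀ a, 0 ≤ q a) (hq : Summable q)
    (hx : Summable fun a => x a ^ 2 * q a) {R : ℝ} (hR : 0 ≤ R) :
    R ^ 2 * ∑' a, {a | R < |x a|}.indicator q a ≤ ∑' a, x a ^ 2 * q a := by
  rw [← tsum_mul_left]
  refine ((hq.indicator _).mul_left _).tsum_le_tsum (fun a => ?_) hx
  simp only [indicator_apply, mem_ofPred_eq]
  split_ifs with h
  · rw [← sq_abs (x a)]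
    exact mul_le_mul_of_nonneg_right (pow_le_pow_left₀ hR h.le 2) (hq0 a)
  · simpa using mul_nonneg (sq_nonneg (x a)) (hq0 a)

theorem summable_truncSq_secondDiff_mul (hq0 : ∀ a, 0 ≤ q a) (hq : Summable q) (r : ℝ) :
    Summable fun a => (truncSq r (x a + 1) + truncSq r (x a - 1) - 2 * truncSq r (x a)) * q a :=
  summable_mul_of_abs_le (C := 4 * r ^ 2) hq0 hq fun a => by
    have h₁ := abs_le.1 (@abs_truncSq_le r (x a + 1))
    have h₂ := abs_le.1 (@abs_truncSq_le r (x a - 1))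
    have h₃ := abs_le.1 (@abs_truncSq_le r (x a))
    rw [abs_le]; constructor <;> linarith

theorem tsum_truncSq_secondDiff_le (hq0 : ∀ a, 0 ≤ q a) (hq1 : HasSum q 1) (r : ℝ) :
    ∑' a, (truncSq r (x a + 1) + truncSq r (x a - 1) - 2 * truncSq r (x a)) * q a ≤ 2 :=
  calc _ ≤ ∑' a, 2 * q a :=
        (summable_truncSq_secondDiff_mul x hq0 hq1.summable r).tsum_le_tsum
          (fun a => mul_le_mul_of_nonneg_right truncSq_secondDiff_le (hq0 a))
          (hq1.summable.mul_left 2)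
    _ = 2 := by rw [tsum_mul_left, hq1.tsum_eq, mul_one]

theorem two_sub_le_tsum_truncSq_secondDiff (hq0 : ∀ a, 0 ≤ q a) (hq1 : HasSum q 1) {R : ℝ}
    (hR : 0 ≤ R) :
    2 - (4 * R + 8) * ∑' a, {a | R < |x a|}.indicator q a ≤
      ∑' a, (truncSq (R + 1) (x a + 1) + truncSq (R + 1) (x a - 1) -
        2 * truncSq (R + 1) (x a)) * q a := by
  have hite := hq1.summable.indicator {a | R < |x a|}
  calc 2 - (4 * R + 8) * ∑' a, {a | R < |x a|}.indicator q a
      = ∑' a, (2 * q a - (4 * R + 8) * {a | R < |x a|}.indicator q a) := by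
        rw [(hq1.summable.mul_left 2).tsum_sub (hite.mul_left _), tsum_mul_left, tsum_mul_left,
          hq1.tsum_eq, mul_one]
    _ ≤ _ := ((hq1.summable.mul_left 2).sub (hite.mul_left _)).tsum_le_tsum (fun a => by
        have h := mul_le_mul_of_nonneg_right (truncSq_secondDiff_ge hR (x := x a)) (hq0 a)
        simp only [indicator_apply, mem_ofPred_eq]
        split_ifs at h ⊢ <;> linear_combination h)
      (summable_truncSq_secondDiff_mul x hq0 hq1.summable _)

theorem tendsto_tsum_truncSq_mul (hq0 : ∀ a, 0 ≤ q a) (hx : Summable fun a => x a ^ 2 * q a) :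
    Tendsto (fun R : ℝ => ∑' a, truncSq (R + 1) (x a) * q a) atTop (𝓝 (∑' a, x a ^ 2 * q a)) := by
  refine tendsto_tsum_of_dominated_convergence hx (fun a => tendsto_const_nhds.congr' ?_)
    (.of_forall fun R a => ?_)
  · filter_upwards [eventually_ge_atTop |x a|] with R hR
    rw [truncSq_of_abs_le (by linarith)]
  · rw [Real.norm_eq_abs, abs_mul, abs_of_nonneg truncSq_nonneg, abs_of_nonneg (hq0 a)]
    exact mul_le_mul_of_nonneg_right (min_le_left _ _) (hq0 a)

end TruncatedMoments

def coordDiff (y : ℕ × ℕ) : ℝ := y.1 - y.2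

theorem coordDiff_add_one_add_one (a b : ℕ) : coordDiff (a + 1, b + 1) = coordDiff (a, b) := by
  simp only [coordDiff]; push_cast; ring

theorem birthGenerator_comp_coordDiff_sub (f : ℝ → ℝ) (c : ℝ) (y : ℕ × ℕ) :
    birthGenerator (fun z => f (coordDiff z - c)) y =
      f (coordDiff y - c + 1) + f (coordDiff y - c - 1) - 2 * f (coordDiff y - c) := by
  simp only [birthGenerator, coordDiff]; push_cast; ring_nf

namespace IsSolution

variable {p dp : ℝ → ℕ × ℕ → ℝ} {t : ℝ} (c : ℝ)

theorem truncatedMoment_sub_le (hp : IsSolution p dp) (R : ℝ) (ht : 0 ≤ t) :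
    ∑' y, truncSq (R + 1) (coordDiff y - c) * p t y -
      ∑' y, truncSq (R + 1) (coordDiff y - c) * p 0 y ≤ 2 * t :=
  hp.tsum_sub_tsum_le (fun a b => by simp only [coordDiff_add_one_add_one])
    (fun _ => abs_truncSq_le) ht fun s hs => by
      simp only [birthGenerator_comp_coordDiff_sub (truncSq (R + 1))]
      exact tsum_truncSq_secondDiff_le (fun y => coordDiff y - c) (hp.nonneg s hs.1)
        (hp.hasSum_one s hs.1) _

theorem tendsto_truncatedMoment_sub (hp : IsSolution p dp)
    (hsum : ∀ s ∈ Ici (0 : ℝ), Summable fun y => (coordDiff y - c) ^ 2 * p s y) (ht : 0 ≤ t) :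
    Tendsto (fun R : ℝ => ∑' y, truncSq (R + 1) (coordDiff y - c) * p t y -
      ∑' y, truncSq (R + 1) (coordDiff y - c) * p 0 y) atTop
      (𝓝 (∑' y, (coordDiff y - c) ^ 2 * p t y - ∑' y, (coordDiff y - c) ^ 2 * p 0 y)) :=
  (tendsto_tsum_truncSq_mul _ (hp.nonneg t ht) (hsum t ht)).sub
    (tendsto_tsum_truncSq_mul _ (hp.nonneg 0 self_mem_Ici) (hsum 0 self_mem_Ici))

theorem moment_sub_le (hp : IsSolution p dp)
    (hsum : ∀ s ∈ Ici (0 : ℝ), Summable fun y => (coordDiff y - c) ^ 2 * p s y) (ht : 0 ≤ t) :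
    ∑' y, (coordDiff y - c) ^ 2 * p t y - ∑' y, (coordDiff y - c) ^ 2 * p 0 y ≤ 2 * t :=
  le_of_tendsto (hp.tendsto_truncatedMoment_sub c hsum ht)
    (.of_forall fun R => hp.truncatedMoment_sub_le c R ht)

theorem moment_sub_eq (hp : IsSolution p dp)
    (hsum : ∀ s ∈ Ici (0 : ℝ), Summable fun y => (coordDiff y - c) ^ 2 * p s y) (ht : 0 ≤ t) :
    ∑' y, (coordDiff y - c) ^ 2 * p t y - ∑' y, (coordDiff y - c) ^ 2 * p 0 y = 2 * t := by
  -- by `moment_sub_le`, `K` bounds the second moment on all of `[0, t]`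
  set K := ∑' y, (coordDiff y - c) ^ 2 * p 0 y + 2 * t
  have htail : ∀ R > 0, ∀ s ∈ Icc 0 t,
      ∑' y, {y | R < |coordDiff y - c|}.indicator (p s) y ≤ K / R ^ 2 := by
    intro R hR s hs
    rw [le_div_iff₀ (by positivity), mul_comm]
    calc _ ≤ ∑' y, (coordDiff y - c) ^ 2 * p s y :=
          sq_mul_tsum_indicator_le _ (hp.nonneg s hs.1) (hp.hasSum_one s hs.1).summable
            (hsum s hs.1) hR.le
      _ ≤ K := by linarith [hp.moment_sub_le c hsum hs.1, hs.2]
  have hlower : ∀ R > 0, (2 - (4 * R + 8) * (K / R ^ 2)) * t ≤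
      ∑' y, truncSq (R + 1) (coordDiff y - c) * p t y -
        ∑' y, truncSq (R + 1) (coordDiff y - c) * p 0 y := fun R hR =>
    hp.le_tsum_sub_tsum (fun a b => by simp only [coordDiff_add_one_add_one])
      (fun _ => abs_truncSq_le) ht fun s hs => by
        simp only [birthGenerator_comp_coordDiff_sub (truncSq (R + 1))]
        refine le_trans ?_ (two_sub_le_tsum_truncSq_secondDiff (fun y => coordDiff y - c)
          (hp.nonneg s hs.1) (hp.hasSum_one s hs.1) hR.le)
        gcongr
        exact htail R hR s hs
  have hrate : Tendsto (fun R : ℝ => (4 * R + 8) * (K / R ^ 2)) atTop (𝓝 0) := by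
    have h := ((tendsto_inv_atTop_zero.const_mul 4).add
      ((tendsto_inv_atTop_zero.pow 2).const_mul 8)).const_mul K
    simp only [mul_zero, add_zero, ne_eq, OfNat.ofNat_ne_zero, not_false_eq_true, zero_pow] at h
    refine h.congr' ((eventually_ne_atTop 0).mono fun R hR => ?_)
    field_simp
  refine le_antisymm (hp.moment_sub_le c hsum ht) (le_of_tendsto_of_tendsto ?_
    (hp.tendsto_truncatedMoment_sub c hsum ht) ((eventually_gt_atTop 0).mono hlower))
  simpa using (hrate.const_sub 2).mul_const t

end IsSolution

end IntegratorCME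

theorem integrator_network_CME_moments_grow_unboundedly_general
    (α : ℝ) (p dp : ℝ → ℕ × ℕ → ℝ) (g h : ℝ → ℝ)
    -- p(t,·) is a probability distribution for each t ≥ 0
    (hnonneg : ∀ t ∈ Set.Ici (0 : ℝ), ∀ y : ℕ × ℕ, 0 ≤ p t y)
    (hnorm : ∀ t ∈ Set.Ici (0 : ℝ), HasSum (p t) 1)
    -- t ↦ p(t,y) is differentiable with derivative dp(t,y)
    (hderiv : ∀ y : ℕ × ℕ, ∀ t ∈ Set.Ici (0 : ℝ),
      HasDerivWithinAt (fun s => p s y) (dp t y) (Set.Ici (0 : ℝ)) t)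
    -- the Chemical Master Equation (terms with a negative coordinate are zero)
    (hCME : ∀ t ∈ Set.Ici (0 : ℝ), ∀ y : ℕ × ℕ,
      dp t y =
        (if y.1 = 0 then 0 else p t (y.1 - 1, y.2)) +
        (if y.2 = 0 then 0 else p t (y.1, y.2 - 1)) +
        ((y.1 : ℝ) + 1) * ((y.2 : ℝ) + 1) * p t (y.1 + 1, y.2 + 1) -
        (2 + (y.1 : ℝ) * (y.2 : ℝ)) * p t y)
    -- g(t) = Σ_y (y₁ - y₂) p(t,y), absolutely convergent
    (hg : ∀ t ∈ Set.Ici (0 : ℝ),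
      HasSum (fun y : ℕ × ℕ => ((y.1 : ℝ) - (y.2 : ℝ)) * p t y) (g t))
    -- h(t) = Σ_y (y₁ - y₂)² p(t,y), absolutely convergent
    (hh : ∀ t ∈ Set.Ici (0 : ℝ),
      HasSum (fun y : ℕ × ℕ => ((y.1 : ℝ) - (y.2 : ℝ)) ^ 2 * p t y) (h t))
    -- initial moments
    (hg0 : g 0 = α) (hh0 : h 0 = α ^ 2) :
    ∀ t ∈ Set.Ici (0 : ℝ), g t = α ∧ h t = α ^ 2 + 2 * t := by
  intro t ht
  have hp : IntegratorCME.IsSolution p dp := ⟨hnonneg, hnorm, hderiv, hCME⟩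
  have hmoment : ∀ c : ℝ, ∀ s ∈ Set.Ici (0 : ℝ), HasSum
      (fun y => (IntegratorCME.coordDiff y - c) ^ 2 * p s y) (h s - 2 * c * g s + c ^ 2) :=
    fun c s hs => by
      have := ((hh s hs).sub ((hg s hs).mul_left (2 * c))).add ((hnorm s hs).mul_left (c ^ 2))
      rw [mul_one] at this
      exact this.congr_fun fun y => by rw [IntegratorCME.coordDiff]; ring
  have hgrowth : ∀ c : ℝ, h t - 2 * c * g t + c ^ 2 - (h 0 - 2 * c * g 0 + c ^ 2) = 2 * t :=
    fun c => by
      rw [← (hmoment c t ht).tsum_eq, ← (hmoment c 0 Set.self_mem_Ici).tsum_eq]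
      exact hp.moment_sub_eq c (fun s hs => (hmoment c s hs).summable) ht
  have h₀ := hgrowth 0
  have h₁ := hgrowth 1
  constructor <;> linarith

/-- For the Chemical Master Equation of the network `∅ → X₁` (propensity 1),
`∅ → X₂` (propensity 1), `X₁ + X₂ → ∅` (propensity `x₁ x₂`), the first moment of
`X₁ - X₂` is conserved while the second moment of `X₁ - X₂` grows linearly, hence
unboundedly, with time. -/
theorem integrator_network_CME_moments_grow_unboundedly
    (α : ℝ) (p dp : ℝ → ℕ × ℕ → ℝ) (g h : ℝ → ℝ)
    -- p(t,·) is a probability distribution for each t ≥ 0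
    (hnonneg : ∀ t ∈ Set.Ici (0 : ℝ), ∀ y : ℕ × ℕ, 0 ≤ p t y)
    (hnorm : ∀ t ∈ Set.Ici (0 : ℝ), HasSum (p t) 1)
    -- t ↦ p(t,y) is differentiable with derivative dp(t,y)
    (hderiv : ∀ y : ℕ × ℕ, ∀ t ∈ Set.Ici (0 : ℝ),
      HasDerivWithinAt (fun s => p s y) (dp t y) (Set.Ici (0 : ℝ)) t)
    -- the Chemical Master Equation (terms with a negative coordinate are zero)
    (hCME : ∀ t ∈ Set.Ici (0 : ℝ), ∀ y : ℕ × ℕ,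
      dp t y =
        (if y.1 = 0 then 0 else p t (y.1 - 1, y.2)) +
        (if y.2 = 0 then 0 else p t (y.1, y.2 - 1)) +
        ((y.1 : ℝ) + 1) * ((y.2 : ℝ) + 1) * p t (y.1 + 1, y.2 + 1) -
        (2 + (y.1 : ℝ) * (y.2 : ℝ)) * p t y)
    -- g(t) = Σ_y (y₁ - y₂) p(t,y), absolutely convergent
    (hg : ∀ t ∈ Set.Ici (0 : ℝ),
      HasSum (fun y : ℕ × ℕ => ((y.1 : ℝ) - (y.2 : ℝ)) * p t y) (g t))
    (hgabs : ∀ t ∈ Set.Ici (0 : ℝ),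
      Summable (fun y : ℕ × ℕ => |((y.1 : ℝ) - (y.2 : ℝ)) * p t y|))
    -- h(t) = Σ_y (y₁ - y₂)² p(t,y), absolutely convergent
    (hh : ∀ t ∈ Set.Ici (0 : ℝ),
      HasSum (fun y : ℕ × ℕ => ((y.1 : ℝ) - (y.2 : ℝ)) ^ 2 * p t y) (h t))
    (hhabs : ∀ t ∈ Set.Ici (0 : ℝ),
      Summable (fun y : ℕ × ℕ => ((y.1 : ℝ) - (y.2 : ℝ)) ^ 2 * p t y))
    -- g and h are differentiable, with derivative given by term-wise differentiation
    (hgderiv : ∀ t ∈ Set.Ici (0 : ℝ),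
      HasDerivWithinAt g (∑' y : ℕ × ℕ, ((y.1 : ℝ) - (y.2 : ℝ)) * dp t y)
        (Set.Ici (0 : ℝ)) t)
    (hhderiv : ∀ t ∈ Set.Ici (0 : ℝ),
      HasDerivWithinAt h (∑' y : ℕ × ℕ, ((y.1 : ℝ) - (y.2 : ℝ)) ^ 2 * dp t y)
        (Set.Ici (0 : ℝ)) t)
    -- initial moments
    (hg0 : g 0 = α) (hh0 : h 0 = α ^ 2) :
    ∀ t ∈ Set.Ici (0 : ℝ), g t = α ∧ h t = α ^ 2 + 2 * t :=
  integrator_network_CME_moments_grow_unboundedly_general α p dp g h hnonneg hnorm hderiv hCME hg hh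
    hg0 hh0
end

section
/- Consider the stochastic Lotka–Volterra network with n species, propensities α_i for ∅ → X_i (stoichiometric change +e_i), β_i x_i for X_i → 2X_i (change +e_i), δ_i x_i for X_i → ∅ (change −e_i), and for competition X_i + X_j → X_j (change −e_i) the propensity γ_{ij} x_i x_j if i ≠ j and γ_{ii} x_i (x_i − 1) if i = j, where α_i, β_i, δ_i > 0 and γ_{ij} ≥ 0. Let v ∈ ℝⁿ with v_i > 0 for all i, and let Γ(v) be the matrix with entries Γ(v)_{ij} = v_i γ_{ij}. If the symmetric matrix Γ(v) + Γ(v)ᵀ is positive definite, then there exist constants c₁ > 0 and c₂ > 0 such that for every x ∈ ℕⁿ: Σ_i v_i α_i + Σ_i v_i (β_i − δ_i + γ_{ii}) x_i − Σ_{i,j} v_i γ_{ij} x_i x_j ≤ c₁ − c₂ ⟨v, x⟩, where ⟨v, x⟩ = Σ_i v_i x_i. (The left-hand side equals the drift Σ_k λ_k(x)⟨v, ζ_k⟩ of this network; this is condition DD1, from which ergodicity follows.) -/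
open Matrix

/-
The competition terms make the drift a quadratic polynomial in `x` whose quadratic part is
`-½ xᵀ (Γ(v) + Γ(v)ᵀ) x`. A positive definite form is bounded below by `m ‖x‖²` (minimise it on the
unit sphere), so adding the linear term `⟨v, x⟩` still leaves a polynomial bounded above: this gives
DD1 with `c₂ = 1`.
-/

theorem exists_mul_norm_sq_le_of_pos_of_homogeneous {E : Type*} [NormedAddCommGroup E]
    [NormedSpace ℝ E] [FiniteDimensional ℝ E] {f : E → ℝ} (hf : Continuous f)
    (hsmul : ∀ (c : ℝ) y, f (c • y) = c ^ 2 * f y) (hpos : ∀ y, y ≠ 0 → 0 < f y) :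
    ∃ m > 0, ∀ y, m * ‖y‖ ^ 2 ≤ f y := by
  have hf0 : f 0 = 0 := by simpa using hsmul 0 0
  cases subsingleton_or_nontrivial E with
  | inl _ => exact ⟨1, one_pos, fun y => by simp [Subsingleton.elim y 0, hf0]⟩
  | inr _ =>
    obtain ⟨u₀, hu₀, hmin⟩ := (isCompact_sphere (0 : E) 1).exists_isMinOn
      (NormedSpace.sphere_nonempty.mpr zero_le_one) hf.continuousOn
    have hu₀_ne : u₀ ≠ 0 := ne_zero_of_mem_unit_sphere ⟨u₀, hu₀⟩
    refine ⟨f u₀, hpos u₀ hu₀_ne, fun y => ?_⟩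
    rcases eq_or_ne y 0 with rfl | hy
    · simp [hf0]
    have hny : ‖y‖ ≠ 0 := norm_ne_zero_iff.mpr hy
    have hunit : ‖y‖⁻¹ • y ∈ Metric.sphere (0 : E) 1 := by
      simp [norm_smul, hny]
    have hrescale : f y = ‖y‖ ^ 2 * f (‖y‖⁻¹ • y) := by
      rw [hsmul, ← mul_assoc, ← mul_pow, mul_inv_cancel₀ hny, one_pow, one_mul]
    rw [hrescale, mul_comm]
    exact mul_le_mul_of_nonneg_left (hmin hunit) (sq_nonneg _)

theorem Matrix.PosDef.exists_mul_norm_sq_le_dotProduct_mulVec {n : Type*} [Fintype n]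
    {A : Matrix n n ℝ} (hA : A.PosDef) :
    ∃ m > 0, ∀ y : n → ℝ, m * ‖y‖ ^ 2 ≤ y ⬝ᵥ A *ᵥ y :=
  exists_mul_norm_sq_le_of_pos_of_homogeneous
    (continuous_id.dotProduct (continuous_const.matrix_mulVec continuous_id))
    (fun c y => by simp only [mulVec_smul, smul_dotProduct, dotProduct_smul, smul_eq_mul]; ring)
    (fun _ hy => hA.dotProduct_mulVec_pos hy)

theorem dotProduct_le_sum_abs_mul_norm {n : Type*} [Fintype n] (b y : n → ℝ) :
    b ⬝ᵥ y ≤ (∑ i, |b i|) * ‖y‖ := by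
  rw [dotProduct, Finset.sum_mul]
  refine Finset.sum_le_sum fun i _ => ?_
  calc b i * y i ≤ |b i| * |y i| := by rw [← abs_mul]; exact le_abs_self _
    _ ≤ |b i| * ‖y‖ := by gcongr; exact norm_le_pi_norm y i

theorem mul_sub_mul_sq_le_sq_div {m : ℝ} (hm : 0 < m) (K t : ℝ) :
    K * t - m * t ^ 2 ≤ K ^ 2 / (4 * m) := by
  rw [le_div_iff₀ (by positivity)]
  nlinarith [sq_nonneg (2 * m * t - K)]

theorem Matrix.PosDef.exists_dotProduct_sub_dotProduct_mulVec_le {n : Type*} [Fintype n]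
    {A : Matrix n n ℝ} (hA : A.PosDef) (b : n → ℝ) :
    ∃ C, ∀ y : n → ℝ, b ⬝ᵥ y - y ⬝ᵥ A *ᵥ y ≤ C := by
  obtain ⟨m, hm, hcoercive⟩ := hA.exists_mul_norm_sq_le_dotProduct_mulVec
  set K := ∑ i, |b i|
  refine ⟨K ^ 2 / (4 * m), fun y => ?_⟩
  linarith [dotProduct_le_sum_abs_mul_norm b y, hcoercive y, mul_sub_mul_sq_le_sq_div hm K ‖y‖]

theorem dotProduct_mulVec_of_add_swap {n R : Type*} [Fintype n] [CommRing R]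
    (a : n → n → R) (y : n → R) :
    y ⬝ᵥ (of fun i j => a i j + a j i) *ᵥ y = 2 * ∑ i, ∑ j, a i j * y i * y j := by
  have hswap : ∑ i, ∑ j, a j i * y i * y j = ∑ i, ∑ j, a i j * y i * y j := by
    rw [Finset.sum_comm]
    exact Finset.sum_congr rfl fun _ _ => Finset.sum_congr rfl fun _ _ => by ring
  calc y ⬝ᵥ (of fun i j => a i j + a j i) *ᵥ y
      = ∑ i, ∑ j, (a i j * y i * y j + a j i * y i * y j) := by
        simp only [dotProduct, mulVec, of_apply, Finset.mul_sum]
        exact Finset.sum_congr rfl fun _ _ => Finset.sum_congr rfl fun _ _ => by ring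
    _ = 2 * ∑ i, ∑ j, a i j * y i * y j := by
        simp only [Finset.sum_add_distrib, hswap]
        ring

theorem lotka_volterra_drift_condition_posdef_general {n : ℕ}
    (α β δ : Fin n → ℝ) (γ : Fin n → Fin n → ℝ)
    (v : Fin n → ℝ)
    (hpos : (Matrix.of fun i j => v i * γ i j + v j * γ j i).PosDef) :
    ∃ c₁ > (0 : ℝ), ∃ c₂ > (0 : ℝ), ∀ x : Fin n → ℕ,
      (∑ i, v i * α i) + (∑ i, v i * (β i - δ i + γ i i) * (x i : ℝ))
        - (∑ i, ∑ j, v i * γ i j * (x i : ℝ) * (x j : ℝ))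
        ≤ c₁ - c₂ * ∑ i, v i * (x i : ℝ) := by
  set w : Fin n → ℝ := fun i => v i * (β i - δ i + γ i i) + v i
  obtain ⟨C, hC⟩ := hpos.exists_dotProduct_sub_dotProduct_mulVec_le ((2 : ℝ) • w)
  set c := (∑ i, v i * α i) + C / 2 with hc
  refine ⟨max c 1, by positivity, 1, one_pos, fun x => ?_⟩
  have hbound := hC fun i => (x i : ℝ)
  rw [dotProduct_mulVec_of_add_swap (fun i j => v i * γ i j), smul_dotProduct] at hbound
  have hw : w ⬝ᵥ (fun i => (x i : ℝ))
      = (∑ i, v i * (β i - δ i + γ i i) * (x i : ℝ)) + ∑ i, v i * (x i : ℝ) := by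
    simp only [w, dotProduct, add_mul, Finset.sum_add_distrib]
  rw [smul_eq_mul, hw] at hbound
  linarith [le_max_left c 1, hc]

/-- Drift condition **DD1** for the stochastic Lotka–Volterra network when
`Γ(v) + Γ(v)ᵀ` is positive definite, where `Γ(v)_{ij} = v_i γ_{ij}`. -/
theorem lotka_volterra_drift_condition_posdef {n : ℕ}
    (α β δ : Fin n → ℝ) (γ : Fin n → Fin n → ℝ)
    (hα : ∀ i, 0 < α i) (hβ : ∀ i, 0 < β i) (hδ : ∀ i, 0 < δ i)
    (hγ : ∀ i j, 0 ≤ γ i j)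
    (v : Fin n → ℝ) (hv : ∀ i, 0 < v i)
    (hpos : (Matrix.of fun i j => v i * γ i j + v j * γ j i).PosDef) :
    ∃ c₁ > (0 : ℝ), ∃ c₂ > (0 : ℝ), ∀ x : Fin n → ℕ,
      (∑ i, v i * α i) + (∑ i, v i * (β i - δ i + γ i i) * (x i : ℝ))
        - (∑ i, ∑ j, v i * γ i j * (x i : ℝ) * (x j : ℝ))
        ≤ c₁ - c₂ * ∑ i, v i * (x i : ℝ) :=
  lotka_volterra_drift_condition_posdef_general α β δ γ v hpos
end

section
/- Consider the stochastic Lotka–Volterra network with n species, propensities α_i for ∅ → X_i (stoichiometric change +e_i), β_i x_i for X_i → 2X_i (change +e_i), δ_i x_i for X_i → ∅ (change −e_i), and for competition X_i + X_j → X_j (change −e_i) the propensity γ_{ij} x_i x_j if i ≠ j and γ_{ii} x_i (x_i − 1) if i = j, where α_i, β_i, δ_i > 0 and γ_{ij} ≥ 0. Let v ∈ ℝⁿ with v_i > 0 for all i, and let Γ(v) be the matrix with entries Γ(v)_{ij} = v_i γ_{ij}. If Γ(v) + Γ(v)ᵀ is copositive (i.e., xᵀ(Γ(v) + Γ(v)ᵀ)x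 ≥ 0 for all x ∈ ℝⁿ with x_i ≥ 0 for all i) and β_i − δ_i < 0 for every i, then there exist constants c₁ > 0 and c₂ > 0 such that for every x ∈ ℕⁿ: Σ_i v_i α_i + Σ_i v_i (β_i − δ_i + γ_{ii}) x_i − Σ_{i,j} v_i γ_{ij} x_i x_j ≤ c₁ − c₂ ⟨v, x⟩, where ⟨v, x⟩ = Σ_i v_i x_i. -/
/-!
Write the linear coefficient `β i - δ i + γ i i` as `(β i - δ i) + γ i i`. On `ℕⁿ` one has
`x i ≤ x i * x i`, so with `γ ≥ 0` the diagonal competition terms `v i γ i i x i` are absorbed by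
the quadratic form `∑ v i γ i j x i x j`, and what is left is `∑ v i α i + ∑ v i (β i - δ i) x i`.
Since `β < δ` componentwise, the last sum is at most `-c₂ ∑ v i x i` with `c₂ = min (δ i - β i)`.
-/

theorem exists_pos_le_of_forall_pos {ι : Type*} [Finite ι] {f : ι → ℝ} (hf : ∀ i, 0 < f i) :
    ∃ c > 0, ∀ i, c ≤ f i := by
  cases isEmpty_or_nonempty ι
  · exact ⟨1, one_pos, isEmptyElim⟩
  · obtain ⟨i₀, hi₀⟩ := Finite.exists_min f
    exact ⟨f i₀, hf i₀, hi₀⟩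

theorem sum_diag_mul_le_sum_sum_mul_mul {ι : Type*} [Fintype ι] {A : ι → ι → ℝ}
    (hA : ∀ i j, 0 ≤ A i j) (x : ι → ℕ) :
    ∑ i, A i i * x i ≤ ∑ i, ∑ j, A i j * x i * x j := by
  refine Finset.sum_le_sum fun i _ => ?_
  have hsq : (x i : ℝ) ≤ x i * x i := by exact_mod_cast Nat.le_mul_self (x i)
  calc A i i * x i ≤ A i i * x i * x i := by
        rw [mul_assoc]; exact mul_le_mul_of_nonneg_left hsq (hA i i)
    _ ≤ ∑ j, A i j * x i * x j :=
        Finset.single_le_sum (f := fun j => A i j * x i * x j)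
          (fun j _ => by positivity [hA i j]) (Finset.mem_univ i)

theorem sum_mul_mul_le_neg_mul_sum {ι : Type*} [Fintype ι] {v a : ι → ℝ} {c : ℝ}
    (hv : ∀ i, 0 ≤ v i) (hc : ∀ i, a i ≤ -c) (x : ι → ℕ) :
    ∑ i, v i * a i * x i ≤ -c * ∑ i, v i * x i := by
  rw [Finset.mul_sum]
  refine Finset.sum_le_sum fun i _ => ?_
  have hvx : 0 ≤ v i * x i := mul_nonneg (hv i) (Nat.cast_nonneg _)
  nlinarith [mul_le_mul_of_nonneg_left (hc i) hvx]

theorem lotka_volterra_drift_condition_copositive_general {n : ℕ}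
    (α β δ : Fin n → ℝ) (γ : Fin n → Fin n → ℝ)
    (hγ : ∀ i j, 0 ≤ γ i j)
    (v : Fin n → ℝ) (hv : ∀ i, 0 < v i)
    (hβδ : ∀ i, β i - δ i < 0) :
    ∃ c₁ > (0 : ℝ), ∃ c₂ > (0 : ℝ), ∀ x : Fin n → ℕ,
      (∑ i, v i * α i) + (∑ i, v i * (β i - δ i + γ i i) * (x i : ℝ))
        - (∑ i, ∑ j, v i * γ i j * (x i : ℝ) * (x j : ℝ))
        ≤ c₁ - c₂ * ∑ i, v i * (x i : ℝ) := by
  obtain ⟨c₂, hc₂, hc₂le⟩ := exists_pos_le_of_forall_pos fun i => sub_pos.2 (sub_neg.1 (hβδ i))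
  refine ⟨max (∑ i, v i * α i) 1, by positivity, c₂, hc₂, fun x => ?_⟩
  have hcompetition := sum_diag_mul_le_sum_sum_mul_mul
    (fun i j => mul_nonneg (hv i).le (hγ i j)) x
  have hgrowth := sum_mul_mul_le_neg_mul_sum (a := fun i => β i - δ i) (c := c₂) (fun i => (hv i).le)
    (fun i => by linarith [hc₂le i]) x
  have hsplit : ∑ i, v i * (β i - δ i + γ i i) * (x i : ℝ)
      = ∑ i, v i * (β i - δ i) * x i + ∑ i, v i * γ i i * x i := by
    rw [← Finset.sum_add_distrib]; simp only [mul_add, add_mul]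
  linarith [le_max_left (∑ i, v i * α i) 1]

/-- Drift condition **DD1** for the stochastic Lotka–Volterra network when
`Γ(v) + Γ(v)ᵀ` is copositive and `β_i < δ_i` for all `i`,
where `Γ(v)_{ij} = v_i γ_{ij}`. -/
theorem lotka_volterra_drift_condition_copositive {n : ℕ}
    (α β δ : Fin n → ℝ) (γ : Fin n → Fin n → ℝ)
    (hα : ∀ i, 0 < α i) (hβ : ∀ i, 0 < β i) (hδ : ∀ i, 0 < δ i)
    (hγ : ∀ i j, 0 ≤ γ i j)
    (v : Fin n → ℝ) (hv : ∀ i, 0 < v i)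
    (hcopos : ∀ x : Fin n → ℝ, (∀ i, 0 ≤ x i) →
      0 ≤ x ⬝ᵥ (Matrix.of fun i j => v i * γ i j + v j * γ j i).mulVec x)
    (hβδ : ∀ i, β i - δ i < 0) :
    ∃ c₁ > (0 : ℝ), ∃ c₂ > (0 : ℝ), ∀ x : Fin n → ℕ,
      (∑ i, v i * α i) + (∑ i, v i * (β i - δ i + γ i i) * (x i : ℝ))
        - (∑ i, ∑ j, v i * γ i j * (x i : ℝ) * (x j : ℝ))
        ≤ c₁ - c₂ * ∑ i, v i * (x i : ℝ) :=
  lotka_volterra_drift_condition_copositive_general α β δ γ hγ v hv hβδ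
end

section
/- Consider the stochastic feedback loop with dimerization, with state x = (x₁, x₂, x₃) ∈ ℕ³ (mRNA, protein, dimer) and reactions ∅ → X₁ (propensity f(x₃), change (1,0,0)), X₁ → X₁ + X₂ (propensity k₂ x₁, change (0,1,0)), X₂ + X₂ → X₃ (propensity k₂₃ x₂(x₂−1), change (0,−2,1)), X₃ → X₂ + X₂ (propensity k₃₂ x₃, change (0,2,−1)), and X_i → ∅ (propensity γ_i x_i, change −e_i) for i = 1,2,3, where k₂, k₂₃, k₃₂, γ₁, γ₂, γ₃ are arbitrary positive constants and f : ℕ → ℝ is an arbitrary bounded nonnegative function. Then there exist a vector v ∈ ℝ³ with v_i > 0 for all i and v₃ = 2 v₂ (so that ⟨v, ζ⟩ = 0 for the dimerization and dissociation reactions) and constants c₁ > 0, c₂ > 0 such that for all x ∈ ℕ³: v₁ f(x₃) + v₂ k₂ x₁ − γ₁ v₁ x₁ − γ₂ v₂ x₂ − γ₃ v₃ x₃ ≤ c₁ − c₂ ⟨v, x⟩. (This is condition DD1 for the feedback loop, from which its ergodicity for any positive rates and any bounded nonnegative feedback follows.) -/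
/-!
Weight the species by `v = (2 k₂ / γ₁, 1, 2)`. Then `v₃ = 2 v₂` makes the drift blind to
dimerization, half of the mRNA degradation `γ₁ v₁ x₁` cancels the protein production `k₂ x₁`,
and each species is left decaying at rate at least `c₂ = min (γ₁ / 2) (min γ₂ γ₃)`; the
bounded feedback contributes at most the constant `v₁ · sup f`.
-/

open Finset

theorem Finset.mul_sum_le_sum_mul_of_le {ι : Type*} (s : Finset ι) {c : ℝ} {a y : ι → ℝ}
    (ha : ∀ i ∈ s, c ≤ a i) (hy : ∀ i ∈ s, 0 ≤ y i) :
    c * ∑ i ∈ s, y i ≤ ∑ i ∈ s, a i * y i := by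
  rw [mul_sum]
  exact sum_le_sum fun i hi => mul_le_mul_of_nonneg_right (ha i hi) (hy i hi)

theorem feedback_loop_drift_condition_general (k₂ γ₁ γ₂ γ₃ : ℝ)
    (hk₂ : 0 < k₂)
    (hγ₁ : 0 < γ₁) (hγ₂ : 0 < γ₂) (hγ₃ : 0 < γ₃)
    (f : ℕ → ℝ) (hf_bdd : ∃ B : ℝ, ∀ x, f x ≤ B) :
    ∃ v₁ v₂ v₃ : ℝ, 0 < v₁ ∧ 0 < v₂ ∧ 0 < v₃ ∧ v₃ = 2 * v₂ ∧
      ∃ c₁ > (0 : ℝ), ∃ c₂ > (0 : ℝ), ∀ x₁ x₂ x₃ : ℕ,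
        v₁ * f x₃ + v₂ * k₂ * (x₁ : ℝ) - γ₁ * v₁ * (x₁ : ℝ)
            - γ₂ * v₂ * (x₂ : ℝ) - γ₃ * v₃ * (x₃ : ℝ)
          ≤ c₁ - c₂ * (v₁ * (x₁ : ℝ) + v₂ * (x₂ : ℝ) + v₃ * (x₃ : ℝ)) := by
  obtain ⟨B, hB⟩ := hf_bdd
  set v₁ := 2 * k₂ / γ₁
  set c₂ := min (γ₁ / 2) (min γ₂ γ₃)
  have hv₁ : 0 < v₁ := by positivity
  refine ⟨v₁, 1, 2, hv₁, one_pos, two_pos, by norm_num, v₁ * max B 1, by positivity,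
    c₂, by positivity, fun x₁ x₂ x₃ => ?_⟩
  have hproduction : 1 * k₂ * (x₁ : ℝ) = γ₁ / 2 * (v₁ * x₁) := by
    simp only [v₁]; field_simp
  have hdecay : c₂ * (v₁ * x₁ + 1 * x₂ + 2 * x₃)
      ≤ γ₁ / 2 * (v₁ * x₁) + γ₂ * (1 * x₂) + γ₃ * (2 * x₃) := by
    simpa [Fin.sum_univ_three, add_assoc] using
      univ.mul_sum_le_sum_mul_of_le (c := c₂) (a := ![γ₁ / 2, γ₂, γ₃])
        (y := ![v₁ * x₁, 1 * x₂, 2 * x₃])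
        (by simp [Fin.forall_fin_succ, c₂]) (by simp [Fin.forall_fin_succ]; positivity)
  have hfeedback : v₁ * f x₃ ≤ v₁ * max B 1 :=
    mul_le_mul_of_nonneg_left ((hB x₃).trans (le_max_left _ _)) hv₁.le
  linarith

/-- Drift condition **DD1** for the stochastic feedback loop with dimerization:
for any positive rates and any bounded nonnegative feedback function `f`, there is a
positive vector `v` with `v₃ = 2 v₂` and constants `c₁, c₂ > 0` bounding the drift. -/
theorem feedback_loop_drift_condition (k₂ k₂₃ k₃₂ γ₁ γ₂ γ₃ : ℝ)
    (hk₂ : 0 < k₂) (hk₂₃ : 0 < k₂₃) (hk₃₂ : 0 < k₃₂)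
    (hγ₁ : 0 < γ₁) (hγ₂ : 0 < γ₂) (hγ₃ : 0 < γ₃)
    (f : ℕ → ℝ) (hf_nonneg : ∀ x, 0 ≤ f x) (hf_bdd : ∃ B : ℝ, ∀ x, f x ≤ B) :
    ∃ v₁ v₂ v₃ : ℝ, 0 < v₁ ∧ 0 < v₂ ∧ 0 < v₃ ∧ v₃ = 2 * v₂ ∧
      ∃ c₁ > (0 : ℝ), ∃ c₂ > (0 : ℝ), ∀ x₁ x₂ x₃ : ℕ,
        v₁ * f x₃ + v₂ * k₂ * (x₁ : ℝ) - γ₁ * v₁ * (x₁ : ℝ)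
            - γ₂ * v₂ * (x₂ : ℝ) - γ₃ * v₃ * (x₃ : ℝ)
          ≤ c₁ - c₂ * (v₁ * (x₁ : ℝ) + v₂ * (x₂ : ℝ) + v₃ * (x₃ : ℝ)) :=
  feedback_loop_drift_condition_general k₂ γ₁ γ₂ γ₃ hk₂ hγ₁ hγ₂ hγ₃ f hf_bdd
end

section
/- Consider the stochastic switch with state x = (m₁, p₁, m₂, p₂) ∈ ℕ⁴ (mRNA and protein of genes 1 and 2) and reactions ∅ → M₁ (propensity f₁(p₂), change +e₁), M₁ → M₁ + P₁ (propensity k₁ m₁, change +e₂), ∅ → M₂ (propensity f₂(p₁), change +e₃), M₂ → M₂ + P₂ (propensity k₂ m₂, change +e₄), and degradation of each species X_i with propensity γ_i x_i (change −e_i), where k₁, k₂ and all γ_i are arbitrary positive constants and f₁, f₂ : ℕ → ℝ are arbitrary bounded nonnegative functions. Then there exist a vector v ∈ ℝ⁴ with v_i > 0 for all i and constants c₁ > 0, c₂ > 0 such that for all x ∈ ℕ⁴: v₁ f₁(p₂) + v₂ k₁ m₁ + v₃ f₂(p₁) + v₄ k₂ m₂ − Σ_{i=1}^{4} γ_i v_i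 x_i ≤ c₁ − c₂ ⟨v, x⟩. (This is condition DD1 for the stochastic switch, from which its ergodicity for any positive rates and any bounded nonnegative functions f₁, f₂ follows.) -/
/-!
The switch splits into two independent gene blocks `(mᵢ, pᵢ)`, each a cascade
`∅ → M → M + P` with degradation, coupled only through the bounded production rates.
Weighting the protein by `γ_M / (2k)` lets translation consume only half of the mRNA
degradation, so each block's drift is at most `B - c (m + v p)` with `c = min (γ_M / 2) γ_P`.
-/

theorem gene_drift_le {k γm γp c a B m p : ℝ} (hk : 0 < k) (hγm : 0 ≤ γm)
    (hcm : c ≤ γm / 2) (hcp : c ≤ γp) (ha : a ≤ B) (hm : 0 ≤ m) (hp : 0 ≤ p) :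
    a + γm / (2 * k) * k * m - (γm * m + γp * (γm / (2 * k)) * p)
      ≤ B - c * (m + γm / (2 * k) * p) := by
  have htranslation : γm / (2 * k) * k * m = γm / 2 * m := by field_simp
  have hvp : 0 ≤ γm / (2 * k) * p := by positivity
  linarith [mul_le_mul_of_nonneg_right hcm hm, mul_le_mul_of_nonneg_right hcp hvp]

theorem stochastic_switch_drift_condition_general (k₁ k₂ γ₁ γ₂ γ₃ γ₄ : ℝ)
    (hk₁ : 0 < k₁) (hk₂ : 0 < k₂)
    (hγ₁ : 0 < γ₁) (hγ₂ : 0 < γ₂) (hγ₃ : 0 < γ₃) (hγ₄ : 0 < γ₄)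
    (f₁ f₂ : ℕ → ℝ)
    (hf₁_bdd : ∃ B : ℝ, ∀ x, f₁ x ≤ B)
    (hf₂_bdd : ∃ B : ℝ, ∀ x, f₂ x ≤ B) :
    ∃ v₁ v₂ v₃ v₄ : ℝ, 0 < v₁ ∧ 0 < v₂ ∧ 0 < v₃ ∧ 0 < v₄ ∧
      ∃ c₁ > (0 : ℝ), ∃ c₂ > (0 : ℝ), ∀ m₁ p₁ m₂ p₂ : ℕ,
        v₁ * f₁ p₂ + v₂ * k₁ * (m₁ : ℝ) + v₃ * f₂ p₁ + v₄ * k₂ * (m₂ : ℝ)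
            - (γ₁ * v₁ * (m₁ : ℝ) + γ₂ * v₂ * (p₁ : ℝ)
               + γ₃ * v₃ * (m₂ : ℝ) + γ₄ * v₄ * (p₂ : ℝ))
          ≤ c₁ - c₂ * (v₁ * (m₁ : ℝ) + v₂ * (p₁ : ℝ)
               + v₃ * (m₂ : ℝ) + v₄ * (p₂ : ℝ)) := by
  obtain ⟨B₁, hB₁⟩ := hf₁_bdd
  obtain ⟨B₂, hB₂⟩ := hf₂_bdd
  set c₂ := min (min (γ₁ / 2) γ₂) (min (γ₃ / 2) γ₄)
  have hc₂ : 0 < c₂ := lt_min (lt_min (by positivity) hγ₂) (lt_min (by positivity) hγ₄)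
  have hc₁ : B₁ + B₂ ≤ max (B₁ + B₂) 0 + 1 := by linarith [le_max_left (B₁ + B₂) 0]
  refine ⟨1, γ₁ / (2 * k₁), 1, γ₃ / (2 * k₂), one_pos, by positivity, one_pos, by positivity,
    max (B₁ + B₂) 0 + 1, by positivity, c₂, hc₂, fun m₁ p₁ m₂ p₂ => ?_⟩
  obtain ⟨hc₂γ₁, hc₂γ₂⟩ : c₂ ≤ γ₁ / 2 ∧ c₂ ≤ γ₂ := le_min_iff.mp (min_le_left _ _)
  obtain ⟨hc₂γ₃, hc₂γ₄⟩ : c₂ ≤ γ₃ / 2 ∧ c₂ ≤ γ₄ := le_min_iff.mp (min_le_right _ _)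
  have hgene₁ := gene_drift_le hk₁ hγ₁.le hc₂γ₁ hc₂γ₂ (hB₁ p₂) (m₁.cast_nonneg (α := ℝ))
    (p₁.cast_nonneg (α := ℝ))
  have hgene₂ := gene_drift_le hk₂ hγ₃.le hc₂γ₃ hc₂γ₄ (hB₂ p₁) (m₂.cast_nonneg (α := ℝ))
    (p₂.cast_nonneg (α := ℝ))
  linear_combination hgene₁ + hgene₂ + hc₁

/-- Drift condition **DD1** for the stochastic switch: for any positive rates and
any bounded nonnegative functions `f₁, f₂`, there are a positive vector `v` and
constants `c₁, c₂ > 0` bounding the drift. The state is `x = (m₁, p₁, m₂, p₂)`. -/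
theorem stochastic_switch_drift_condition (k₁ k₂ γ₁ γ₂ γ₃ γ₄ : ℝ)
    (hk₁ : 0 < k₁) (hk₂ : 0 < k₂)
    (hγ₁ : 0 < γ₁) (hγ₂ : 0 < γ₂) (hγ₃ : 0 < γ₃) (hγ₄ : 0 < γ₄)
    (f₁ f₂ : ℕ → ℝ)
    (hf₁_nonneg : ∀ x, 0 ≤ f₁ x) (hf₁_bdd : ∃ B : ℝ, ∀ x, f₁ x ≤ B)
    (hf₂_nonneg : ∀ x, 0 ≤ f₂ x) (hf₂_bdd : ∃ B : ℝ, ∀ x, f₂ x ≤ B) :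
    ∃ v₁ v₂ v₃ v₄ : ℝ, 0 < v₁ ∧ 0 < v₂ ∧ 0 < v₃ ∧ 0 < v₄ ∧
      ∃ c₁ > (0 : ℝ), ∃ c₂ > (0 : ℝ), ∀ m₁ p₁ m₂ p₂ : ℕ,
        v₁ * f₁ p₂ + v₂ * k₁ * (m₁ : ℝ) + v₃ * f₂ p₁ + v₄ * k₂ * (m₂ : ℝ)
            - (γ₁ * v₁ * (m₁ : ℝ) + γ₂ * v₂ * (p₁ : ℝ)
               + γ₃ * v₃ * (m₂ : ℝ) + γ₄ * v₄ * (p₂ : ℝ))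
          ≤ c₁ - c₂ * (v₁ * (m₁ : ℝ) + v₂ * (p₁ : ℝ)
               + v₃ * (m₂ : ℝ) + v₄ * (p₂ : ℝ)) :=
  stochastic_switch_drift_condition_general k₁ k₂ γ₁ γ₂ γ₃ γ₄ hk₁ hk₂ hγ₁ hγ₂ hγ₃ hγ₄ f₁ f₂ hf₁_bdd
    hf₂_bdd
end

section
/- Consider the stochastic N-gene repressilator with state x = (m₁, …, m_N, p₁, …, p_N) ∈ ℕ^{2N} (mRNA m_i and protein p_i of gene i) and reactions ∅ → M_i with propensity f_i(p_{i−1}) (indices taken cyclically, so p₀ = p_N; change +e_i in the mRNA coordinate), M_i → M_i + P_i with propensity k_i m_i (change +1 in the p_i coordinate), M_i → ∅ with propensity γ_i m_i, and P_i → ∅ with propensity δ_i p_i, where f_i(x) = α_i + β_i/(1 + x^n) with α_i, β_i > 0 and n > 0. Then for any positive values of all rate parameters k_i, γ_i, δ_i, α_i, β_i and n, there exist a vector v ∈ ℝ^{2N} with all components positive and constants c₁ > 0, c₂ > 0 such that for all x ∈ ℕ^{2N}: Σ_{i=1}^{N} v_i^{(m)} f_i(p_{i−1}) + Σ_{i=1}^{N}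 v_i^{(p)} k_i m_i − Σ_{i=1}^{N} γ_i v_i^{(m)} m_i − Σ_{i=1}^{N} δ_i v_i^{(p)} p_i ≤ c₁ − c₂ ⟨v, x⟩, where v_i^{(m)} and v_i^{(p)} denote the components of v corresponding to m_i and p_i. (This is condition DD1 for the repressilator, from which its ergodicity follows.) -/
/-!
Weight each mRNA `m_i` by `v_i^(m) = 2 k_i / γ_i` and each protein by `1`. Translation
then adds `k_i m_i` to the drift, which is only half of the `2 k_i m_i` that mRNA decay
removes, so the weighted state decays at rate at least `c₂ = min_i min (γ_i / 2) δ_i`.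
The Hill production terms are bounded by `α_i + β_i`, which gives the constant `c₁`.
-/

open Finset

lemma div_one_add_rpow_le {β x : ℝ} (hβ : 0 ≤ β) (hx : 0 ≤ x) (n : ℝ) :
    β / (1 + x ^ n) ≤ β :=
  div_le_self hβ (le_add_of_nonneg_right (Real.rpow_nonneg hx n))

/-- The drift of one gene: production `f ≤ F`, translation at rate `k`, decay at rates `γ`, `δ`,
for weights `u`, `w` on the mRNA and protein coordinates. -/
lemma gene_drift_le_s18 {u w f F k γ δ c m p : ℝ} (hu : 0 ≤ u) (hw : 0 ≤ w) (hm : 0 ≤ m)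
    (hp : 0 ≤ p) (hf : f ≤ F) (hmRNA : w * k ≤ (γ - c) * u) (hprotein : c ≤ δ) :
    u * f + w * k * m - γ * u * m - δ * w * p ≤ u * F - c * (u * m + w * p) := by
  nlinarith [mul_le_mul_of_nonneg_left hf hu, mul_le_mul_of_nonneg_right hmRNA hm,
    mul_le_mul_of_nonneg_right hprotein (mul_nonneg hw hp)]

theorem repressilator_drift_condition_general (N : ℕ) [NeZero N]
    (k γ δ α β : Fin N → ℝ) (n : ℝ)
    (hk : ∀ i, 0 < k i) (hγ : ∀ i, 0 < γ i) (hδ : ∀ i, 0 < δ i)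
    (hα : ∀ i, 0 < α i) (hβ : ∀ i, 0 < β i) :
    ∃ vm vp : Fin N → ℝ, (∀ i, 0 < vm i) ∧ (∀ i, 0 < vp i) ∧
      ∃ c₁ > (0 : ℝ), ∃ c₂ > (0 : ℝ), ∀ m p : Fin N → ℕ,
        (∑ i, vm i * (α i + β i / (1 + ((p (i - 1) : ℕ) : ℝ) ^ n)))
            + (∑ i, vp i * k i * ((m i : ℕ) : ℝ))
            - (∑ i, γ i * vm i * ((m i : ℕ) : ℝ))
            - (∑ i, δ i * vp i * ((p i : ℕ) : ℝ))
          ≤ c₁ - c₂ * ((∑ i, vm i * ((m i : ℕ) : ℝ))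
                        + (∑ i, vp i * ((p i : ℕ) : ℝ))) := by
  obtain ⟨i₀, hi₀⟩ := Finite.exists_min fun i => min (γ i / 2) (δ i)
  set c₂ := min (γ i₀ / 2) (δ i₀)
  set vm : Fin N → ℝ := fun i => 2 * k i / γ i
  have hvm : ∀ i, 0 < vm i := fun i => div_pos (mul_pos two_pos (hk i)) (hγ i)
  refine ⟨vm, fun _ => 1, hvm, fun _ => one_pos, ∑ i, vm i * (α i + β i),
    sum_pos (fun i _ => mul_pos (hvm i) (add_pos (hα i) (hβ i))) univ_nonempty,
    c₂, lt_min (half_pos (hγ i₀)) (hδ i₀), fun m p => ?_⟩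
  rw [← sum_add_distrib, ← sum_sub_distrib, ← sum_sub_distrib, ← sum_add_distrib, mul_sum,
    ← sum_sub_distrib]
  refine sum_le_sum fun i _ =>
    gene_drift_le_s18 (hvm i).le zero_le_one (Nat.cast_nonneg _) (Nat.cast_nonneg _) ?_ ?_ ?_
  · gcongr
    exact div_one_add_rpow_le (hβ i).le (Nat.cast_nonneg _) n
  · have hc₂γ : c₂ ≤ γ i / 2 := (hi₀ i).trans (min_le_left _ _)
    calc 1 * k i = (γ i - γ i / 2) * vm i := by
          simp only [vm]; field_simp [(hγ i).ne']; ring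
      _ ≤ (γ i - c₂) * vm i := by gcongr; exact (hvm i).le
  · exact (hi₀ i).trans (min_le_right _ _)

/-- Drift condition **DD1** for the stochastic `N`-gene repressilator, where
`f_i(x) = α_i + β_i/(1 + x^n)` with Hill-type repression and indices taken
cyclically (`p₀ = p_N`): for any positive rate parameters there exist a positive
vector `v = (v^(m), v^(p))` and constants `c₁, c₂ > 0` bounding the drift. -/
theorem repressilator_drift_condition (N : ℕ) [NeZero N]
    (k γ δ α β : Fin N → ℝ) (n : ℝ)
    (hk : ∀ i, 0 < k i) (hγ : ∀ i, 0 < γ i) (hδ : ∀ i, 0 < δ i)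
    (hα : ∀ i, 0 < α i) (hβ : ∀ i, 0 < β i) (hn : 0 < n) :
    ∃ vm vp : Fin N → ℝ, (∀ i, 0 < vm i) ∧ (∀ i, 0 < vp i) ∧
      ∃ c₁ > (0 : ℝ), ∃ c₂ > (0 : ℝ), ∀ m p : Fin N → ℕ,
        (∑ i, vm i * (α i + β i / (1 + ((p (i - 1) : ℕ) : ℝ) ^ n)))
            + (∑ i, vp i * k i * ((m i : ℕ) : ℝ))
            - (∑ i, γ i * vm i * ((m i : ℕ) : ℝ))
            - (∑ i, δ i * vp i * ((p i : ℕ) : ℝ))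
          ≤ c₁ - c₂ * ((∑ i, vm i * ((m i : ℕ) : ℝ))
                        + (∑ i, vp i * ((p i : ℕ) : ℝ))) :=
  repressilator_drift_condition_general N k γ δ α β n hk hγ hδ hα hβ
end

section
/- Consider the stochastic oscillatory p53 model with state x = (x₁, x₂, x₃) ∈ ℕ³ (p53, precursor of Mdm2, Mdm2) and reactions ∅ → X₁ (propensity k₁, change +e₁), X₁ → ∅ (propensity k₂ x₁, change −e₁), X₁ → ∅ (propensity x₁ · k₃ x₃/(x₁ + k₇), change −e₁), X₃ → ∅ (propensity k₆ x₃, change −e₃), X₂ → X₃ (propensity k₅ x₂, change −e₂ + e₃), X₁ → X₁ + X₂ (propensity k₄ x₁, change +e₂), where k₁, …, k₇ are arbitrary positive constants. Then there exist a vector v ∈ ℝ³ with v_i > 0 for all i and constants c₁ > 0, c₂ > 0 such that for all x ∈ ℕ³: k₁ v₁ − k₂ v₁ x₁ − v₁ k₃ x₁ x₃/(x₁ + k₇) + k₄ v₂ x₁ − k₅ v₂ x₂ + k₅ v₃ x₂ − k₆ v₃ x₃ ≤ c₁ − c₂ ⟨v, x⟩. (This is condition DD1 for the p53 model, from which its ergodicity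 for any positive values of the rate parameters follows.) -/
/-!
Take `v = (2k₄, k₂, k₂/2)`. The Michaelis–Menten degradation of X₁ only lowers the drift, and
the remaining drift is linear: the synthesis of X₂ by X₁ (rate `k₄ v₂`) is outweighed by the
degradation of X₁ (rate `k₂ v₁`), and the conversion X₂ → X₃ lowers `⟨v, x⟩` because `v₃ < v₂`.
Each coordinate of `x` therefore decays at a positive rate, and `c₂` is the smallest of them.
-/

theorem p53_drift_le_linear {k₁ k₂ k₃ k₄ k₅ k₆ k₇ v₁ v₂ v₃ x₁ x₂ x₃ : ℝ}
    (hk₃ : 0 ≤ k₃) (hk₇ : 0 ≤ k₇) (hv₁ : 0 ≤ v₁) (hx₁ : 0 ≤ x₁) (hx₃ : 0 ≤ x₃) :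
    k₁ * v₁ - k₂ * v₁ * x₁ - v₁ * k₃ * x₁ * x₃ / (x₁ + k₇)
        + k₄ * v₂ * x₁ - k₅ * v₂ * x₂ + k₅ * v₃ * x₂ - k₆ * v₃ * x₃
      ≤ k₁ * v₁ - (k₂ * v₁ - k₄ * v₂) * x₁ - k₅ * (v₂ - v₃) * x₂ - k₆ * v₃ * x₃ := by
  have hdeg : 0 ≤ v₁ * k₃ * x₁ * x₃ / (x₁ + k₇) := by positivity
  linarith

theorem mul_add_add_le_of_le {c α₁ α₂ α₃ w₁ w₂ w₃ : ℝ}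
    (h₁ : c ≤ α₁) (h₂ : c ≤ α₂) (h₃ : c ≤ α₃) (hw₁ : 0 ≤ w₁) (hw₂ : 0 ≤ w₂) (hw₃ : 0 ≤ w₃) :
    c * (w₁ + w₂ + w₃) ≤ α₁ * w₁ + α₂ * w₂ + α₃ * w₃ := by
  rw [mul_add, mul_add]
  gcongr

/-- Drift condition **DD1** for the stochastic oscillatory p53 model: for any
positive rate parameters `k₁, …, k₇` there exist a positive vector `v` and
constants `c₁, c₂ > 0` bounding the drift. The state is `x = (x₁, x₂, x₃)`
(p53, precursor of Mdm2, Mdm2). -/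
theorem p53_drift_condition (k₁ k₂ k₃ k₄ k₅ k₆ k₇ : ℝ)
    (hk₁ : 0 < k₁) (hk₂ : 0 < k₂) (hk₃ : 0 < k₃) (hk₄ : 0 < k₄)
    (hk₅ : 0 < k₅) (hk₆ : 0 < k₆) (hk₇ : 0 < k₇) :
    ∃ v₁ v₂ v₃ : ℝ, 0 < v₁ ∧ 0 < v₂ ∧ 0 < v₃ ∧
      ∃ c₁ > (0 : ℝ), ∃ c₂ > (0 : ℝ), ∀ x₁ x₂ x₃ : ℕ,
        k₁ * v₁ - k₂ * v₁ * (x₁ : ℝ)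
            - v₁ * k₃ * (x₁ : ℝ) * (x₃ : ℝ) / ((x₁ : ℝ) + k₇)
            + k₄ * v₂ * (x₁ : ℝ) - k₅ * v₂ * (x₂ : ℝ)
            + k₅ * v₃ * (x₂ : ℝ) - k₆ * v₃ * (x₃ : ℝ)
          ≤ c₁ - c₂ * (v₁ * (x₁ : ℝ) + v₂ * (x₂ : ℝ) + v₃ * (x₃ : ℝ)) := by
  set c₂ := min (min (k₂ / 2) (k₅ / 2)) k₆
  have hc₂ : 0 < c₂ := by positivity
  refine ⟨2 * k₄, k₂, k₂ / 2, by positivity, hk₂, by positivity,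
    k₁ * (2 * k₄), by positivity, c₂, hc₂, fun x₁ x₂ x₃ => ?_⟩
  have hx₁ : (0 : ℝ) ≤ x₁ := x₁.cast_nonneg
  have hx₃ : (0 : ℝ) ≤ x₃ := x₃.cast_nonneg
  have hdecay : c₂ * (2 * k₄ * x₁ + k₂ * x₂ + k₂ / 2 * x₃)
      ≤ k₂ / 2 * (2 * k₄ * x₁) + k₅ / 2 * (k₂ * x₂) + k₆ * (k₂ / 2 * x₃) :=
    mul_add_add_le_of_le ((min_le_left _ _).trans (min_le_left _ _))
      ((min_le_left _ _).trans (min_le_right _ _)) (min_le_right _ _)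
      (by positivity) (by positivity) (by positivity)
  calc _ ≤ k₁ * (2 * k₄) - (k₂ * (2 * k₄) - k₄ * k₂) * x₁ - k₅ * (k₂ - k₂ / 2) * x₂
          - k₆ * (k₂ / 2) * x₃ :=
        p53_drift_le_linear hk₃.le hk₇.le (by positivity) hx₁ hx₃
    _ = k₁ * (2 * k₄) - (k₂ / 2 * (2 * k₄ * x₁) + k₅ / 2 * (k₂ * x₂) + k₆ * (k₂ / 2 * x₃)) := by
        ring
    _ ≤ _ := by linarith
end
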